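/- arXiv:2112.10856 — 10 statements merged into one kernel-verified Lean document; each statement's English description precedes it below -/
import Mathlib

section
/- Let A_1,...,A_K be bounded operators from H1 to H2 with closed range such that R(A_k) ⊆ N(A_{k'}*) and R(A_k*) ⊆ N(A_{k'}) for all k ≠ k'. Then the range of the sum ∑_{k=1}^K A_k equals the orthogonal direct sum of the ranges R(A_1) ⊕ ... ⊕ R(A_K). -/
/-!
The ranges are orthogonal because `R(A_k') ⊆ N(A_k*) = R(A_k)ᗮ`. For the sum, every vector of
`R(A_k)` is `A_k z` with `z ⊥ N(A_k)`, and `N(A_k)ᗮ` is the closure of `R(A_k*)`, which lies in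
the closed subspace `N(A_k')` for `k' ≠ k`; hence `(∑ A) z = A_k z`.
-/

noncomputable section
open ContinuousLinearMap
open scoped InnerProductSpace

/-- `X` is the Moore–Penrose inverse of `A`: the four Penrose equations. -/
def IsMPInv {H₁ H₂ : Type*} [NormedAddCommGroup H₁] [InnerProductSpace ℂ H₁] [CompleteSpace H₁]
    [NormedAddCommGroup H₂] [InnerProductSpace ℂ H₂] [CompleteSpace H₂]
    (A : H₁ →L[ℂ] H₂) (X : H₂ →L[ℂ] H₁) : Prop :=
  A ∘L X ∘L A = A ∧ X ∘L A ∘L X = X ∧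
    adjoint (A ∘L X) = A ∘L X ∧ adjoint (X ∘L A) = X ∘L A

variable {H₁ H₂ : Type*} [NormedAddCommGroup H₁] [InnerProductSpace ℂ H₁] [CompleteSpace H₁]
    [NormedAddCommGroup H₂] [InnerProductSpace ℂ H₂] [CompleteSpace H₂]

namespace ContinuousLinearMap

variable {𝕜 E F : Type*} [RCLike 𝕜] [NormedAddCommGroup E] [InnerProductSpace 𝕜 E] [CompleteSpace E]
  [NormedAddCommGroup F] [InnerProductSpace 𝕜 F]

theorem exists_mem_orthogonal_ker_apply_eq (B : E →L[𝕜] F) (x : E) :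
    ∃ z ∈ B.kerᗮ, B z = B x := by
  have : CompleteSpace B.ker := B.isClosed_ker.completeSpace_coe
  refine ⟨x - B.ker.starProjection x,
    Submodule.sub_starProjection_mem_orthogonal x, ?_⟩
  rw [map_sub, sub_eq_self]
  exact B.ker.starProjection_apply_mem x

variable [CompleteSpace F]

theorem isOrtho_range_of_range_le_ker_adjoint {B C : E →L[𝕜] F}
    (h : C.range ≤ (adjoint B).ker) :
    B.range ⟂ C.range :=
  (Submodule.isOrtho_iff_le.mpr (B.orthogonal_range ▸ h)).symm

theorem orthogonal_ker_le_ker_of_range_adjoint_le {B C : E →L[𝕜] F}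
    (h : (adjoint B).range ≤ C.ker) :
    B.kerᗮ ≤ C.ker := by
  rw [B.orthogonal_ker]
  exact Submodule.topologicalClosure_minimal _ h C.isClosed_ker

theorem range_sum_eq_iSup_range {ι : Type*} [Fintype ι] (A : ι → E →L[𝕜] F)
    (h : ∀ k k', k ≠ k' → (adjoint (A k)).range ≤ (A k').ker) :
    (∑ k, A k).range = ⨆ k, (A k).range := by
  apply le_antisymm
  · rintro _ ⟨x, rfl⟩
    rw [coe_coe, sum_apply]
    exact Submodule.sum_mem _ fun k _ ↦ Submodule.mem_iSup_of_mem k ⟨x, rfl⟩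
  · refine iSup_le fun k ↦ ?_
    rintro _ ⟨x, rfl⟩
    obtain ⟨z, hz, hAz⟩ := (A k).exists_mem_orthogonal_ker_apply_eq x
    have hker (k') (hk' : k' ≠ k) : A k' z = 0 :=
      orthogonal_ker_le_ker_of_range_adjoint_le (h k k' hk'.symm) hz
    refine ⟨z, ?_⟩
    rw [coe_coe, sum_apply,
      Finset.sum_eq_single_of_mem k (Finset.mem_univ k) fun k' _ hk' ↦ hker k' hk']
    exact hAz

end ContinuousLinearMap

theorem stmt1_general {K : ℕ} (A : Fin K → (H₁ →L[ℂ] H₂))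
    (horth1 : ∀ k k', k ≠ k' → LinearMap.range (A k : H₁ →ₗ[ℂ] H₂) ≤ LinearMap.ker ((adjoint (A k') : H₂ →L[ℂ] H₁) : H₂ →ₗ[ℂ] H₁))
    (horth2 : ∀ k k', k ≠ k' → LinearMap.range ((adjoint (A k) : H₂ →L[ℂ] H₁) : H₂ →ₗ[ℂ] H₁) ≤ LinearMap.ker (A k' : H₁ →ₗ[ℂ] H₂)) :
    (∀ k k', k ≠ k' → ∀ x ∈ LinearMap.range (A k : H₁ →ₗ[ℂ] H₂), ∀ y ∈ LinearMap.range (A k' : H₁ →ₗ[ℂ] H₂),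
      ⟪x, y⟫_ℂ = 0) ∧
    LinearMap.range ((∑ k, A k : H₁ →L[ℂ] H₂) : H₁ →ₗ[ℂ] H₂) = ⨆ k, LinearMap.range (A k : H₁ →ₗ[ℂ] H₂) :=
  ⟨fun k k' hk _ hx _ hy ↦
      (isOrtho_range_of_range_le_ker_adjoint (horth1 k' k hk.symm)).inner_eq hx hy,
    range_sum_eq_iSup_range A horth2⟩

theorem stmt1 {K : ℕ} (A : Fin K → (H₁ →L[ℂ] H₂))
    (hclosed : ∀ k, IsClosed (LinearMap.range (A k : H₁ →ₗ[ℂ] H₂) : Set H₂))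
    (horth1 : ∀ k k', k ≠ k' → LinearMap.range (A k : H₁ →ₗ[ℂ] H₂) ≤ LinearMap.ker ((adjoint (A k') : H₂ →L[ℂ] H₁) : H₂ →ₗ[ℂ] H₁))
    (horth2 : ∀ k k', k ≠ k' → LinearMap.range ((adjoint (A k) : H₂ →L[ℂ] H₁) : H₂ →ₗ[ℂ] H₁) ≤ LinearMap.ker (A k' : H₁ →ₗ[ℂ] H₂)) :
    (∀ k k', k ≠ k' → ∀ x ∈ LinearMap.range (A k : H₁ →ₗ[ℂ] H₂), ∀ y ∈ LinearMap.range (A k' : H₁ →ₗ[ℂ] H₂),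
      ⟪x, y⟫_ℂ = 0) ∧
    LinearMap.range ((∑ k, A k : H₁ →L[ℂ] H₂) : H₁ →ₗ[ℂ] H₂) = ⨆ k, LinearMap.range (A k : H₁ →ₗ[ℂ] H₂) :=
  stmt1_general A horth1 horth2
end
end

section
/- Let A_1,...,A_K be bounded operators from H1 to H2 with closed range such that R(A_k) ⊆ N(A_{k'}*) and R(A_k*) ⊆ N(A_{k'}) for all k ≠ k'. Then ∑_{k=1}^K A_k has closed range and (∑_{k=1}^K A_k)† = ∑_{k=1}^K A_k†. -/
noncomputable section
open ContinuousLinearMap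
open scoped InnerProductSpace

variable {H₁ H₂ : Type*} [NormedAddCommGroup H₁] [InnerProductSpace ℂ H₁] [CompleteSpace H₁]
    [NormedAddCommGroup H₂] [InnerProductSpace ℂ H₂] [CompleteSpace H₂]

/-!
Since `range B_k ⊆ range A_k*` and `ker A_k* ⊆ ker B_k`, the orthogonality hypotheses make the
cross products `A_k B_k'` and `B_k A_k'` (`k ≠ k'`) vanish. Every Penrose product of the sums then
collapses to the sum of the diagonal products, so the four equations pass to the sums. The range of
an operator with a Moore–Penrose inverse `X` is closed, being the fixed-point set of `A X`.
-/

theorem ContinuousLinearMap.sum_comp_sum_of_comp_eq_zero {R E F G ι : Type*} [Semiring R]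
    [TopologicalSpace E] [AddCommMonoid E] [Module R E]
    [TopologicalSpace F] [AddCommMonoid F] [Module R F] [ContinuousAdd F]
    [TopologicalSpace G] [AddCommMonoid G] [Module R G] [ContinuousAdd G]
    (s : Finset ι) (f : ι → F →L[R] G) (g : ι → E →L[R] F)
    (h : ∀ i j, i ≠ j → f i ∘L g j = 0) :
    (∑ i ∈ s, f i) ∘L (∑ j ∈ s, g j) = ∑ i ∈ s, f i ∘L g i := by
  rw [finsetSum_comp]
  refine Finset.sum_congr rfl fun i hi => ?_
  rw [comp_finsetSum]
  exact Finset.sum_eq_single_of_mem i hi fun j _ hji => h i j hji.symm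

namespace IsMPInv

variable {A : H₁ →L[ℂ] H₂} {X : H₂ →L[ℂ] H₁}

theorem isClosed_range (h : IsMPInv A X) :
    IsClosed (LinearMap.range (A : H₁ →ₗ[ℂ] H₂) : Set H₂) := by
  have hfix : (LinearMap.range (A : H₁ →ₗ[ℂ] H₂) : Set H₂) = {y | (A ∘L X) y = y} := by
    ext y
    refine ⟨?_, fun hy => ⟨X y, hy⟩⟩
    rintro ⟨x, rfl⟩
    exact congrArg (· x) h.1
  rw [hfix]
  exact isClosed_eq (A ∘L X).continuous continuous_id

theorem range_le_range_adjoint (h : IsMPInv A X) :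
    LinearMap.range (X : H₂ →ₗ[ℂ] H₁) ≤ LinearMap.range (adjoint A : H₂ →ₗ[ℂ] H₁) := by
  -- `X = (X A)* X = A* X* X`
  have hX : adjoint A ∘L adjoint X ∘L X = X := by
    rw [← comp_assoc, ← adjoint_comp, h.2.2.2]
    exact h.2.1
  rintro _ ⟨y, rfl⟩
  exact ⟨adjoint X (X y), congrArg (· y) hX⟩

theorem ker_adjoint_le_ker (h : IsMPInv A X) :
    LinearMap.ker (adjoint A : H₂ →ₗ[ℂ] H₁) ≤ LinearMap.ker (X : H₂ →ₗ[ℂ] H₁) := by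
  -- `X = X (A X)* = X X* A*`
  have hX : X ∘L adjoint X ∘L adjoint A = X := by
    rw [← adjoint_comp, h.2.2.1, ← comp_assoc]
    exact h.2.1
  intro y (hy : adjoint A y = 0)
  simpa [hy] using (congrArg (· y) hX).symm

theorem sum {ι : Type*} (s : Finset ι) {A : ι → H₁ →L[ℂ] H₂} {X : ι → H₂ →L[ℂ] H₁}
    (hMP : ∀ i ∈ s, IsMPInv (A i) (X i))
    (hAX : ∀ i j, i ≠ j → A i ∘L X j = 0) (hXA : ∀ i j, i ≠ j → X i ∘L A j = 0) :
    IsMPInv (∑ i ∈ s, A i) (∑ i ∈ s, X i) := by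
  have hAXA : ∀ i j, i ≠ j → (A i ∘L X i) ∘L A j = 0 := fun i j hij => by
    rw [comp_assoc, hXA i j hij, comp_zero]
  have hXAX : ∀ i j, i ≠ j → (X i ∘L A i) ∘L X j = 0 := fun i j hij => by
    rw [comp_assoc, hAX i j hij, comp_zero]
  have hAX_sum := sum_comp_sum_of_comp_eq_zero s A X hAX
  have hXA_sum := sum_comp_sum_of_comp_eq_zero s X A hXA
  refine ⟨?_, ?_, ?_, ?_⟩
  · rw [← comp_assoc, hAX_sum, sum_comp_sum_of_comp_eq_zero s _ A hAXA]
    exact Finset.sum_congr rfl fun i hi => (hMP i hi).1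
  · rw [← comp_assoc, hXA_sum, sum_comp_sum_of_comp_eq_zero s _ X hXAX]
    exact Finset.sum_congr rfl fun i hi => (hMP i hi).2.1
  · rw [hAX_sum, map_sum]
    exact Finset.sum_congr rfl fun i hi => (hMP i hi).2.2.1
  · rw [hXA_sum, map_sum]
    exact Finset.sum_congr rfl fun i hi => (hMP i hi).2.2.2

end IsMPInv

theorem stmt3_general {K : ℕ} (A : Fin K → (H₁ →L[ℂ] H₂)) (B : Fin K → (H₂ →L[ℂ] H₁))
    (horth1 : ∀ k k', k ≠ k' → LinearMap.range (A k : H₁ →ₗ[ℂ] H₂) ≤ LinearMap.ker (adjoint (A k') : H₂ →ₗ[ℂ] H₁))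
    (horth2 : ∀ k k', k ≠ k' → LinearMap.range (adjoint (A k) : H₂ →ₗ[ℂ] H₁) ≤ LinearMap.ker (A k' : H₁ →ₗ[ℂ] H₂))
    (hMP : ∀ k, IsMPInv (A k) (B k)) :
    IsClosed (LinearMap.range ((∑ k, A k : H₁ →L[ℂ] H₂) : H₁ →ₗ[ℂ] H₂) : Set H₂) ∧
    IsMPInv (∑ k, A k) (∑ k, B k) := by
  have hAB : ∀ k k', k ≠ k' → A k ∘L B k' = 0 := fun k k' hne => by
    have := (hMP k').range_le_range_adjoint.trans (horth2 k' k hne.symm)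
    exact coe_injective (LinearMap.range_le_ker_iff.mp this)
  have hBA : ∀ k k', k ≠ k' → B k ∘L A k' = 0 := fun k k' hne => by
    have := (horth1 k' k hne.symm).trans (hMP k).ker_adjoint_le_ker
    exact coe_injective (LinearMap.range_le_ker_iff.mp this)
  have hMPsum := IsMPInv.sum Finset.univ (fun k _ => hMP k) hAB hBA
  exact ⟨hMPsum.isClosed_range, hMPsum⟩

theorem stmt3 {K : ℕ} (A : Fin K → (H₁ →L[ℂ] H₂)) (B : Fin K → (H₂ →L[ℂ] H₁))
    (hclosed : ∀ k, IsClosed (LinearMap.range (A k : H₁ →ₗ[ℂ] H₂) : Set H₂))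
    (horth1 : ∀ k k', k ≠ k' → LinearMap.range (A k : H₁ →ₗ[ℂ] H₂) ≤ LinearMap.ker (adjoint (A k') : H₂ →ₗ[ℂ] H₁))
    (horth2 : ∀ k k', k ≠ k' → LinearMap.range (adjoint (A k) : H₂ →ₗ[ℂ] H₁) ≤ LinearMap.ker (A k' : H₁ →ₗ[ℂ] H₂))
    (hMP : ∀ k, IsMPInv (A k) (B k)) :
    IsClosed (LinearMap.range ((∑ k, A k : H₁ →L[ℂ] H₂) : H₁ →ₗ[ℂ] H₂) : Set H₂) ∧
    IsMPInv (∑ k, A k) (∑ k, B k) :=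
  stmt3_general A B horth1 horth2 hMP
end
end

section
/- Let A_1,...,A_K be bounded operators from H1 to H2 with closed range such that R(A_k) ⊆ N(A_{k'}*) and R(A_k*) ⊆ N(A_{k'}) for all k ≠ k'. Then for each k_0, the operator (∑_{k=1}^K A_k)† is a {1,3,4}-inverse of A_{k_0}, i.e., setting X = (∑ A_k)†, one has A_{k_0} X A_{k_0} = A_{k_0}, (A_{k_0} X)* = A_{k_0} X and (X A_{k_0})* = X A_{k_0}. -/
/-!
Write `S = ∑ k, A k`. The orthogonality hypotheses give `S† A_k = A_k† A_k` and
`S A_k† = A_k A_k†`. Since `T† T C = T† T D` forces `T C = T D`, the Penrose identity `S† S X = S†`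
descends to `A_k† S X = A_k†`. This makes `(A_k X)† = (A_k X)† (A_k X)`, so `A_k X` is
self-adjoint, and then `A_k X A_k = (S X)† A_k = A_k`. Passing to adjoints (`X†` is the
Moore–Penrose inverse of `S†`, and the hypotheses are symmetric under `A_k ↦ A_k†`) gives the
self-adjointness of `X A_k`.
-/

noncomputable section
open ContinuousLinearMap
open scoped InnerProductSpace

variable {H₁ H₂ : Type*} [NormedAddCommGroup H₁] [InnerProductSpace ℂ H₁] [CompleteSpace H₁]
    [NormedAddCommGroup H₂] [InnerProductSpace ℂ H₂] [CompleteSpace H₂]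

open scoped InnerProduct

def IsOneThreeFourInverse (A : H₁ →L[ℂ] H₂) (X : H₂ →L[ℂ] H₁) : Prop :=
  A ∘L X ∘L A = A ∧ (A ∘L X)† = A ∘L X ∧ (X ∘L A)† = X ∘L A

namespace ContinuousLinearMap

section

variable {R M N P : Type*} [Semiring R] [TopologicalSpace M] [AddCommMonoid M] [Module R M]
  [TopologicalSpace N] [AddCommMonoid N] [Module R N] [TopologicalSpace P] [AddCommMonoid P]
  [Module R P]

theorem comp_eq_zero_of_range_le_ker {f : M →L[R] N} {g : N →L[R] P}
    (h : LinearMap.range (f : M →ₗ[R] N) ≤ LinearMap.ker (g : N →ₗ[R] P)) : g ∘L f = 0 := by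
  ext x
  exact h ⟨x, rfl⟩

theorem sum_comp_eq_of_comp_eq_zero [ContinuousAdd P] {ι : Type*} [Fintype ι]
    (f : ι → N →L[R] P) (g : M →L[R] N) (k : ι) (h : ∀ j, j ≠ k → f j ∘L g = 0) : (∑ j, f j) ∘L g = f k ∘L g := by
  rw [finsetSum_comp, Finset.sum_eq_single k (fun j _ hj ↦ h j hj) (by simp)]

end

variable {𝕜 E F G : Type*} [RCLike 𝕜] [NormedAddCommGroup E] [InnerProductSpace 𝕜 E]
  [NormedAddCommGroup F] [InnerProductSpace 𝕜 F] [NormedAddCommGroup G] [InnerProductSpace 𝕜 G]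

theorem comp_eq_comp_of_adjoint_comp_self_comp_eq [CompleteSpace E] [CompleteSpace F]
    [CompleteSpace G] {T : E →L[𝕜] F} {C D : G →L[𝕜] E} (h : T† ∘L T ∘L C = T† ∘L T ∘L D) : T ∘L C = T ∘L D := by
  rw [← sub_eq_zero, ← comp_sub, ← adjoint_comp_self_eq_zero_iff, adjoint_comp, comp_assoc,
    comp_sub, comp_sub, h, sub_self, comp_zero]

theorem adjoint_eq_self_of_adjoint_eq_adjoint_comp_self [CompleteSpace E] {P : E →L[𝕜] E}
    (h : P† = P† ∘L P) : P† = P := by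
  have h' := congrArg adjoint h
  rwa [adjoint_comp, adjoint_adjoint, ← h, eq_comm] at h'

end ContinuousLinearMap

namespace IsMPInv

variable {S B : H₁ →L[ℂ] H₂} {X : H₂ →L[ℂ] H₁}

theorem adjoint (hX : IsMPInv S X) : IsMPInv (S†) (X†) := by
  obtain ⟨h₁, h₂, h₃, h₄⟩ := hX
  refine ⟨?_, ?_, ?_, ?_⟩
  · rw [← adjoint_comp, ← adjoint_comp, comp_assoc, h₁]
  · rw [← adjoint_comp, ← adjoint_comp, comp_assoc, h₂]
  · rw [← adjoint_comp, adjoint_adjoint, h₄]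
  · rw [← adjoint_comp, adjoint_adjoint, h₃]

theorem adjoint_comp_comp (hX : IsMPInv S X) : S† ∘L S ∘L X = S† := by
  conv_rhs => rw [← hX.1, ← comp_assoc, adjoint_comp, hX.2.2.1]

theorem comp_comp_eq_self_and_adjoint_comp_eq (hX : IsMPInv S X)
    (hS : S† ∘L B = B† ∘L B) (hS' : S ∘L B† = B ∘L B†) :
    B ∘L X ∘L B = B ∧ (B ∘L X)† = B ∘L X := by
  have hBS : B† ∘L S = B† ∘L B := by
    simpa [adjoint_comp] using congrArg (·†) hS
  have hSB : B ∘L S† = B ∘L B† := by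
    simpa [adjoint_comp] using congrArg (·†) hS'
  have hBSX : B† ∘L S ∘L X = B† := by
    have key := comp_eq_comp_of_adjoint_comp_self_comp_eq (T := B†) (C := S ∘L X) (D := .id ℂ H₂)
    simp only [adjoint_adjoint, comp_id] at key
    exact key (by rw [← comp_assoc, ← hSB, comp_assoc, hX.adjoint_comp_comp])
  have hSXB : S ∘L X ∘L B = B := by
    simpa [adjoint_comp, hX.2.2.1, comp_assoc] using congrArg (·†) hBSX
  have hself : (B ∘L X)† = B ∘L X := by
    apply adjoint_eq_self_of_adjoint_eq_adjoint_comp_self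
    calc (B ∘L X)† = X† ∘L (B† ∘L S) ∘L X := by
          rw [comp_assoc, hBSX, adjoint_comp]
      _ = (B ∘L X)† ∘L B ∘L X := by
          rw [hBS, adjoint_comp, comp_assoc, comp_assoc]
  refine ⟨?_, hself⟩
  calc B ∘L X ∘L B = (B ∘L X)† ∘L B := by rw [hself, comp_assoc]
    _ = (S ∘L X)† ∘L B := by
        rw [adjoint_comp, adjoint_comp, comp_assoc, comp_assoc, hS]
    _ = B := by rw [hX.2.2.1, comp_assoc, hSXB]

theorem isOneThreeFourInverse (hX : IsMPInv S X)
    (hS : S† ∘L B = B† ∘L B) (hS' : S ∘L B† = B ∘L B†) : IsOneThreeFourInverse B X := by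
  obtain ⟨hBXB, hBX⟩ := hX.comp_comp_eq_self_and_adjoint_comp_eq hS hS'
  obtain ⟨-, hXB⟩ := hX.adjoint.comp_comp_eq_self_and_adjoint_comp_eq (B := B†)
    (by rw [adjoint_adjoint, adjoint_adjoint, hS']) (by rw [adjoint_adjoint, hS])
  refine ⟨hBXB, hBX, ?_⟩
  rwa [← adjoint_comp, adjoint_adjoint, eq_comm] at hXB

end IsMPInv

theorem stmt4_general {K : ℕ} (A : Fin K → (H₁ →L[ℂ] H₂)) (X : H₂ →L[ℂ] H₁)
    (horth1 : ∀ k k', k ≠ k' → LinearMap.range (A k : H₁ →ₗ[ℂ] H₂) ≤ LinearMap.ker (adjoint (A k') : H₂ →ₗ[ℂ] H₁))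
    (horth2 : ∀ k k', k ≠ k' → LinearMap.range (adjoint (A k) : H₂ →ₗ[ℂ] H₁) ≤ LinearMap.ker (A k' : H₁ →ₗ[ℂ] H₂))
    (hX : IsMPInv (∑ k, A k) X) :
    ∀ k₀, A k₀ ∘L X ∘L A k₀ = A k₀ ∧
      adjoint (A k₀ ∘L X) = A k₀ ∘L X ∧ adjoint (X ∘L A k₀) = X ∘L A k₀ := by
  intro k
  refine hX.isOneThreeFourInverse ?_ ?_
  · rw [map_sum]
    exact sum_comp_eq_of_comp_eq_zero _ _ k
      fun j hj ↦ comp_eq_zero_of_range_le_ker (horth1 k j hj.symm)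
  · exact sum_comp_eq_of_comp_eq_zero _ _ k
      fun j hj ↦ comp_eq_zero_of_range_le_ker (horth2 k j hj.symm)

theorem stmt4 {K : ℕ} (A : Fin K → (H₁ →L[ℂ] H₂)) (X : H₂ →L[ℂ] H₁)
    (hclosed : ∀ k, IsClosed (LinearMap.range (A k : H₁ →ₗ[ℂ] H₂) : Set H₂))
    (horth1 : ∀ k k', k ≠ k' → LinearMap.range (A k : H₁ →ₗ[ℂ] H₂) ≤ LinearMap.ker (adjoint (A k') : H₂ →ₗ[ℂ] H₁))
    (horth2 : ∀ k k', k ≠ k' → LinearMap.range (adjoint (A k) : H₂ →ₗ[ℂ] H₁) ≤ LinearMap.ker (A k' : H₁ →ₗ[ℂ] H₂))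
    (hX : IsMPInv (∑ k, A k) X) :
    ∀ k₀, A k₀ ∘L X ∘L A k₀ = A k₀ ∧
      adjoint (A k₀ ∘L X) = A k₀ ∘L X ∧ adjoint (X ∘L A k₀) = X ∘L A k₀ :=
  stmt4_general A X horth1 horth2 hX
end
end

section
/- Let A_1,...,A_K be bounded operators from H1 to H2 with closed range such that R(A_k) ⊆ N(A_{k'}*) and R(A_k*) ⊆ N(A_{k'}) for all k ≠ k', and fix k_0. Then N(∑_{k=1}^K A_k) = {0} if and only if R(A_{k_0}*) = N(∑_{k≠k_0} A_k). -/
/-!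
Put `B = ∑_{k ≠ k₀} A_k`. The ranges of `A_{k₀}` and `B` are orthogonal, so
`N(∑ A_k) = N(A_{k₀}) ∩ N(B) = R(A_{k₀}*)ᗮ ∩ N(B)`, and `R(A_{k₀}*) ⊆ N(B)`.
Closed range passes to the adjoint, and for a closed subspace `K ⊆ L` one has
`K = L ↔ Kᗮ ∩ L = 0`.
-/

noncomputable section
open ContinuousLinearMap
open scoped InnerProductSpace

variable {H₁ H₂ : Type*} [NormedAddCommGroup H₁] [InnerProductSpace ℂ H₁] [CompleteSpace H₁]
    [NormedAddCommGroup H₂] [InnerProductSpace ℂ H₂] [CompleteSpace H₂]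

namespace Submodule

variable {𝕜 E : Type*} [RCLike 𝕜] [NormedAddCommGroup E] [InnerProductSpace 𝕜 E]

theorem eq_iff_orthogonal_inf_eq_bot {K L : Submodule 𝕜 E} [K.HasOrthogonalProjection]
    (h : K ≤ L) : K = L ↔ Kᗮ ⊓ L = ⊥ := by
  constructor
  · rintro rfl
    rw [inf_comm, inf_orthogonal_eq_bot]
  · intro hbot
    simpa [hbot] using sup_orthogonal_inf_of_hasOrthogonalProjection h

end Submodule

namespace ContinuousLinearMap

variable {𝕜 E F ι : Type*} [RCLike 𝕜] [NormedAddCommGroup E] [InnerProductSpace 𝕜 E]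
  [NormedAddCommGroup F] [InnerProductSpace 𝕜 F]

theorem le_ker_sum {p : Submodule 𝕜 E} {s : Finset ι} {A : ι → E →L[𝕜] F}
    (h : ∀ k ∈ s, p ≤ (A k).ker) : p ≤ (∑ k ∈ s, A k).ker := fun x hx => by
  simp only [LinearMap.mem_ker, coe_coe, sum_apply]
  exact Finset.sum_eq_zero fun k hk => h k hk hx

variable [CompleteSpace E] [CompleteSpace F]

theorem ker_eq_orthogonal_range_adjoint (A : E →L[𝕜] F) : A.ker = (adjoint A).rangeᗮ := by
  rw [orthogonal_range, adjoint_adjoint]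

-- Open mapping gives preimages `x` of `y` with `‖x‖ ≤ C‖y‖`; pairing with `y` bounds `A†` below.
theorem antilipschitz_adjoint_of_surjective {A : E →L[𝕜] F} (hA : Function.Surjective A) :
    ∃ K, AntilipschitzWith K (adjoint A) := by
  obtain ⟨C, hC, hpre⟩ := A.exists_preimage_norm_le hA
  refine ⟨C.toNNReal, (adjoint A).antilipschitz_of_bound fun y => ?_⟩
  rw [Real.coe_toNNReal C hC.le]
  obtain ⟨x, rfl, hx⟩ := hpre y
  have hsq : ‖A x‖ * ‖A x‖ ≤ C * ‖A x‖ * ‖adjoint A (A x)‖ :=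
    calc ‖A x‖ * ‖A x‖ = RCLike.re ⟪A x, A x⟫_𝕜 := (inner_self_eq_norm_mul_norm _).symm
      _ ≤ ‖⟪adjoint A (A x), x⟫_𝕜‖ := by rw [adjoint_inner_left]; exact RCLike.re_le_norm _
      _ ≤ ‖adjoint A (A x)‖ * ‖x‖ := norm_inner_le_norm _ _
      _ ≤ C * ‖A x‖ * ‖adjoint A (A x)‖ := by
        rw [mul_comm _ ‖x‖]; gcongr
  rcases (norm_nonneg (A x)).eq_or_lt with h0 | hpos
  · rw [← h0]; positivity
  · nlinarith

theorem isClosed_range_adjoint {A : E →L[𝕜] F} (h : IsClosed (A.range : Set F)) :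
    IsClosed ((adjoint A).range : Set E) := by
  have : CompleteSpace A.range := h.completeSpace_coe
  obtain ⟨K, hK⟩ := antilipschitz_adjoint_of_surjective (A := A.rangeRestrict)
    Set.rangeFactorization_surjective
  have hadj : adjoint A = adjoint A.rangeRestrict ∘L A.range.orthogonalProjectionOnto := by
    rw [← A.range.adjoint_subtypeL, ← adjoint_comp, subtypeL_comp_codRestrict]
  have hrange : (adjoint A).range = (adjoint A.rangeRestrict).range := by
    rw [hadj, toLinearMap_comp, LinearMap.range_comp_of_range_eq_top]
    exact LinearMap.range_eq_top.mpr fun v =>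
      ⟨v, A.range.orthogonalProjectionOnto_mem_subspace_eq_self v⟩
  rw [hrange, LinearMap.coe_range]
  exact hK.isClosed_range (adjoint _).uniformContinuous

theorem ker_add_eq_inf_of_range_le_ker_adjoint {A B : E →L[𝕜] F}
    (h : A.range ≤ (adjoint B).ker) : (A + B).ker = A.ker ⊓ B.ker := by
  refine le_antisymm (fun x hx => ?_) (fun x ⟨hA, hB⟩ => by simp_all)
  have hsum : A x + B x = 0 := hx
  have hAx : A x = 0 := by
    rw [← inner_self_eq_zero (𝕜 := 𝕜)]
    calc ⟪A x, A x⟫_𝕜 = ⟪A x, A x + B x⟫_𝕜 - ⟪adjoint B (A x), x⟫_𝕜 := by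
          rw [adjoint_inner_left, inner_add_right, add_sub_cancel_right]
      _ = 0 := by
          rw [hsum, show adjoint B (A x) = 0 from h (LinearMap.mem_range_self _ x)]; simp
  exact ⟨hAx, by rwa [hAx, zero_add] at hsum⟩

end ContinuousLinearMap

theorem stmt6 {K : ℕ} (A : Fin K → (H₁ →L[ℂ] H₂)) (k₀ : Fin K)
    (hclosed : ∀ k, IsClosed (LinearMap.range (A k : H₁ →ₗ[ℂ] H₂) : Set H₂))
    (horth1 : ∀ k k', k ≠ k' → LinearMap.range (A k : H₁ →ₗ[ℂ] H₂) ≤ LinearMap.ker (adjoint (A k') : H₂ →ₗ[ℂ] H₁))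
    (horth2 : ∀ k k', k ≠ k' → LinearMap.range (adjoint (A k) : H₂ →ₗ[ℂ] H₁) ≤ LinearMap.ker (A k' : H₁ →ₗ[ℂ] H₂)) :
    LinearMap.ker ((∑ k, A k : H₁ →L[ℂ] H₂) : H₁ →ₗ[ℂ] H₂) = ⊥ ↔
      LinearMap.range (adjoint (A k₀) : H₂ →ₗ[ℂ] H₁) =
        LinearMap.ker ((∑ k ∈ Finset.univ.erase k₀, A k : H₁ →L[ℂ] H₂) : H₁ →ₗ[ℂ] H₂) := by
  set B := ∑ k ∈ Finset.univ.erase k₀, A k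
  have hsum : ∑ k, A k = A k₀ + B := (Finset.add_sum_erase _ _ (Finset.mem_univ k₀)).symm
  have hrange_le_ker_adjoint : (A k₀).range ≤ (adjoint B).ker := by
    rw [map_sum]
    exact le_ker_sum fun k hk => horth1 k₀ k (Finset.ne_of_mem_erase hk).symm
  have hrange_adjoint_le_ker : (adjoint (A k₀)).range ≤ B.ker :=
    le_ker_sum fun k hk => horth2 k₀ k (Finset.ne_of_mem_erase hk).symm
  have : CompleteSpace (adjoint (A k₀)).range :=
    (isClosed_range_adjoint (hclosed k₀)).completeSpace_coe
  rw [hsum, ker_add_eq_inf_of_range_le_ker_adjoint hrange_le_ker_adjoint,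
    ker_eq_orthogonal_range_adjoint, Submodule.eq_iff_orthogonal_inf_eq_bot hrange_adjoint_le_ker]
end
end

section
/- Let A_1, A_2, ... be bounded closed-range operators from H1 to H2 with R(A_k) ⊆ N(A_{k'}*) and R(A_k*) ⊆ N(A_{k'}) for all k ≠ k'. Suppose the series ∑_{k=1}^∞ A_k converges in operator norm. If N(∑_{k=1}^∞ A_k) = {0} and R(∑_{k=1}^∞ A_k) is closed, then there exists K_0 such that A_k = 0 for all k > K_0. -/
/-! For `k ≠ j` the orthogonality hypothesis says `A j` vanishes on `R(A k*)`, so the sum `S` agrees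
with `A k` there. Since `S` is injective with closed range it is bounded below,
`‖x‖ ≤ K ‖S x‖`, whence `‖x‖ ≤ K ‖A k‖ ‖x‖` on `R(A k*)`. The terms of a convergent series tend
to zero, so `K ‖A k‖ < 1` for all large `k`, forcing `A k* = 0`, i.e. `A k = 0`. -/

noncomputable section
open ContinuousLinearMap
open scoped InnerProductSpace

open Filter Topology
open scoped NNReal

theorem tendsto_zero_of_tendsto_sum_range {G : Type*} [AddCommGroup G] [TopologicalSpace G]
    [IsTopologicalAddGroup G] {f : ℕ → G} {s : G}
    (h : Tendsto (fun n ↦ ∑ k ∈ Finset.range n, f k) atTop (𝓝 s)) :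
    Tendsto f atTop (𝓝 0) := by
  simpa [Finset.sum_range_succ] using (h.comp (tendsto_add_atTop_nat 1)).sub h

namespace ContinuousLinearMap

variable {𝕜 E F : Type*} [NontriviallyNormedField 𝕜] [NormedAddCommGroup E] [NormedSpace 𝕜 E]
  [NormedAddCommGroup F] [NormedSpace 𝕜 F]

theorem apply_eq_of_tendsto_sum_range {A : ℕ → E →L[𝕜] F} {S : E →L[𝕜] F}
    (hS : Tendsto (fun n ↦ ∑ k ∈ Finset.range n, A k) atTop (𝓝 S)) {k : ℕ} {x : E}
    (hx : ∀ j ≠ k, A j x = 0) : S x = A k x := by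
  have hpartial : ∀ᶠ n in atTop, (∑ j ∈ Finset.range n, A j) x = A k x := by
    filter_upwards [eventually_gt_atTop k] with n hn
    rw [sum_apply]
    exact Finset.sum_eq_single_of_mem k (Finset.mem_range.mpr hn) fun j _ hj ↦ hx j hj
  exact tendsto_nhds_unique ((((apply 𝕜 F x).continuous.tendsto S).comp hS).congr' hpartial)
    tendsto_const_nhds

theorem eq_zero_of_le_mul_norm_apply (B : E →L[𝕜] F) {K : ℝ≥0} {x : E} (hx : ‖x‖ ≤ K * ‖B x‖)
    (hB : K * ‖B‖ < 1) : x = 0 := by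
  by_contra hx0
  have hxpos : 0 < ‖x‖ := norm_pos_iff.mpr hx0
  refine lt_irrefl ‖x‖ ?_
  calc ‖x‖ ≤ K * ‖B x‖ := hx
    _ ≤ K * (‖B‖ * ‖x‖) := by gcongr; exact B.le_opNorm x
    _ = K * ‖B‖ * ‖x‖ := (mul_assoc _ _ _).symm
    _ < ‖x‖ := mul_lt_of_lt_one_left hxpos hB

end ContinuousLinearMap

variable {H₁ H₂ : Type*} [NormedAddCommGroup H₁] [InnerProductSpace ℂ H₁] [CompleteSpace H₁]
    [NormedAddCommGroup H₂] [InnerProductSpace ℂ H₂] [CompleteSpace H₂]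

theorem stmt9_general (A : ℕ → (H₁ →L[ℂ] H₂)) (S : H₁ →L[ℂ] H₂)
    (horth2 : ∀ k k', k ≠ k' → LinearMap.range (adjoint (A k) : H₂ →ₗ[ℂ] H₁) ≤ LinearMap.ker (A k' : H₁ →ₗ[ℂ] H₂))
    (hconv : Filter.Tendsto (fun N => ∑ k ∈ Finset.range N, A k) Filter.atTop (nhds S))
    (hker : LinearMap.ker (S : H₁ →ₗ[ℂ] H₂) = ⊥)
    (hrange : IsClosed (LinearMap.range (S : H₁ →ₗ[ℂ] H₂) : Set H₂)) :
    ∃ K₀ : ℕ, ∀ k > K₀, A k = 0 := by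
  obtain ⟨K, hK⟩ := S.antilipschitz_of_injective_of_isClosed_range (LinearMap.ker_eq_bot.mp hker)
    (by simpa [LinearMap.coe_range] using hrange)
  have hsmall : ∀ᶠ k in atTop, (K : ℝ) * ‖A k‖ < 1 :=
    ((tendsto_zero_of_tendsto_sum_range hconv).norm.const_mul (K : ℝ)).eventually
      (gt_mem_nhds (by simp))
  obtain ⟨K₀, hK₀⟩ := eventually_atTop.mp hsmall
  refine ⟨K₀, fun k hk ↦ ?_⟩
  rw [← adjoint.map_eq_zero_iff]
  ext y
  have hSx : S (adjoint (A k) y) = A k (adjoint (A k) y) :=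
    S.apply_eq_of_tendsto_sum_range hconv fun j hj ↦ horth2 k j hj.symm ⟨y, rfl⟩
  exact (A k).eq_zero_of_le_mul_norm_apply (hSx ▸ S.bound_of_antilipschitz hK _) (hK₀ k hk.le)

theorem stmt9 (A : ℕ → (H₁ →L[ℂ] H₂)) (S : H₁ →L[ℂ] H₂)
    (hclosed : ∀ k, IsClosed (LinearMap.range (A k : H₁ →ₗ[ℂ] H₂) : Set H₂))
    (horth1 : ∀ k k', k ≠ k' → LinearMap.range (A k : H₁ →ₗ[ℂ] H₂) ≤ LinearMap.ker (adjoint (A k') : H₂ →ₗ[ℂ] H₁))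
    (horth2 : ∀ k k', k ≠ k' → LinearMap.range (adjoint (A k) : H₂ →ₗ[ℂ] H₁) ≤ LinearMap.ker (A k' : H₁ →ₗ[ℂ] H₂))
    (hconv : Filter.Tendsto (fun N => ∑ k ∈ Finset.range N, A k) Filter.atTop (nhds S))
    (hker : LinearMap.ker (S : H₁ →ₗ[ℂ] H₂) = ⊥)
    (hrange : IsClosed (LinearMap.range (S : H₁ →ₗ[ℂ] H₂) : Set H₂)) :
    ∃ K₀ : ℕ, ∀ k > K₀, A k = 0 :=
  stmt9_general A S horth2 hconv hker hrange
end
end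

section
/- Let A be an m×n complex matrix of rank r, q = min(m,n), and r ≤ q' ≤ q. Let {f_1,...,f_{q'-r}} be an orthonormal subset of N(A), {g_1,...,g_{q'-r}} an orthonormal subset of N(A*), and d_1,...,d_{q'-r} nonzero scalars. Then A† = (A + ∑_{k=1}^{q'-r} d_k g_k f_k*)† − ∑_{k=1}^{q'-r} (1/d_k) f_k g_k*. -/
noncomputable section
open Matrix

/-- `X` is the Moore–Penrose inverse of the complex matrix `A`. -/
def IsMP {m n : ℕ} (A : Matrix (Fin m) (Fin n) ℂ) (X : Matrix (Fin n) (Fin m) ℂ) : Prop :=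
  A * X * A = A ∧ X * A * X = X ∧ (A * X)ᴴ = A * X ∧ (X * A)ᴴ = X * A

/-!
With `G = ∑ dₖ gₖ fₖ*` and `S = ∑ dₖ⁻¹ fₖ gₖ*`, orthonormality gives `G S = ∑ gₖ gₖ*` and
`S G = ∑ fₖ fₖ*`, two orthogonal projections, so `S = G†`. Since `fₖ ∈ N(A) = N(A†*)` and
`gₖ ∈ N(A*) = N(A†)`, the four cross products `A S`, `S A`, `G A†`, `A† G` vanish, and the
Penrose equations for `A + G` and `A† + S` split into those for `A, A†` and for `G, S`.
Uniqueness of the Moore–Penrose inverse then gives `(A + G)† = A† + S`.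
-/

section RankOne

variable {ι l o p : Type*} [Fintype ι] [Fintype o] {α : Type*} [CommSemiring α]

theorem sum_smul_vecMulVec_mul_sum_smul_vecMulVec [StarRing α] [DecidableEq ι]
    (a b : ι → α) (u : ι → l → α) (v w : ι → o → α) (z : ι → p → α)
    (hvw : ∀ k k', star (v k) ⬝ᵥ w k' = if k = k' then 1 else 0) :
    (∑ k, a k • vecMulVec (u k) (star (v k))) * (∑ k, b k • vecMulVec (w k) (star (z k))) =
      ∑ k, (a k * b k) • vecMulVec (u k) (star (z k)) := by
  simp_rw [Matrix.sum_mul, Matrix.mul_sum, Matrix.smul_mul, Matrix.mul_smul,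
    vecMulVec_mul_vecMulVec, hvw, ite_smul, one_smul, zero_smul]
  refine Finset.sum_congr rfl fun k _ => ?_
  rw [Finset.sum_eq_single k (fun k' _ hk' => ?_) (by simp), if_pos rfl, smul_smul]
  rw [if_neg hk'.symm]
  ext; simp [vecMulVec_apply]

theorem sum_smul_vecMulVec_mul_eq_zero (a : ι → α) (u : ι → l → α) (v : ι → o → α)
    {M : Matrix o p α} (hM : ∀ k, v k ᵥ* M = 0) :
    (∑ k, a k • vecMulVec (u k) (v k)) * M = 0 := by
  simp only [Matrix.sum_mul, Matrix.smul_mul, vecMulVec_mul, hM]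
  exact Finset.sum_eq_zero fun k _ => by ext; simp [vecMulVec_apply]

theorem mul_sum_smul_vecMulVec_eq_zero (a : ι → α) (u : ι → o → α) (v : ι → p → α)
    {M : Matrix l o α} (hM : ∀ k, M *ᵥ u k = 0) :
    M * (∑ k, a k • vecMulVec (u k) (v k)) = 0 := by
  simp [Matrix.mul_sum, mul_vecMulVec, hM]

theorem isHermitian_sum_vecMulVec_star [StarRing α] (u : ι → l → α) :
    (∑ k, vecMulVec (u k) (star (u k))).IsHermitian := by
  simp [IsHermitian, conjTranspose_sum]

end RankOne

namespace IsMP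

variable {m n : ℕ} {A : Matrix (Fin m) (Fin n) ℂ} {X : Matrix (Fin n) (Fin m) ℂ}

theorem unique {Y : Matrix (Fin n) (Fin m) ℂ} (hX : IsMP A X) (hY : IsMP A Y) : X = Y := by
  obtain ⟨hX1, hX2, hX3, hX4⟩ := hX
  obtain ⟨hY1, hY2, hY3, hY4⟩ := hY
  have hAX : A * X = A * Y := by
    calc A * X = (A * Y * A * X)ᴴ := by rw [hY1, hX3]
    _ = (A * X) * (A * Y) := by
        rw [Matrix.mul_assoc (A * Y), conjTranspose_mul, hX3, hY3]
    _ = A * Y := by rw [← Matrix.mul_assoc, hX1]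
  have hXA : X * A = Y * A := by
    calc X * A = (X * (A * Y * A))ᴴ := by rw [hY1, hX4]
    _ = (Y * A) * (X * A) := by
        rw [← Matrix.mul_assoc, ← Matrix.mul_assoc, Matrix.mul_assoc, conjTranspose_mul, hX4, hY4]
    _ = Y * A := by rw [Matrix.mul_assoc, ← Matrix.mul_assoc A, hX1]
  calc X = X * A * X := hX2.symm
  _ = Y * A * Y := by rw [hXA, Matrix.mul_assoc, hAX, ← Matrix.mul_assoc]
  _ = Y := hY2

theorem mulVec_eq_zero (hX : IsMP A X) {v : Fin m → ℂ} (hv : Aᴴ *ᵥ v = 0) : X *ᵥ v = 0 :=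
  calc X *ᵥ v = (X * (A * X)ᴴ) *ᵥ v := by rw [hX.2.2.1, ← Matrix.mul_assoc, hX.2.1]
  _ = (X * Xᴴ) *ᵥ (Aᴴ *ᵥ v) := by rw [conjTranspose_mul, ← Matrix.mul_assoc, mulVec_mulVec]
  _ = 0 := by rw [hv, mulVec_zero]

theorem star_vecMul_eq_zero (hX : IsMP A X) {v : Fin n → ℂ} (hv : A *ᵥ v = 0) :
    star v ᵥ* X = 0 :=
  calc star v ᵥ* X = star v ᵥ* ((X * A)ᴴ * X) := by rw [hX.2.2.2, hX.2.1]
  _ = (star v ᵥ* Aᴴ) ᵥ* (Xᴴ * X) := by rw [conjTranspose_mul, Matrix.mul_assoc, vecMul_vecMul]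
  _ = 0 := by rw [← star_mulVec, hv, star_zero, zero_vecMul]

theorem add_of_mul_eq_zero {G : Matrix (Fin m) (Fin n) ℂ} {S : Matrix (Fin n) (Fin m) ℂ}
    (hX : IsMP A X) (hS : IsMP G S) (hAS : A * S = 0) (hSA : S * A = 0)
    (hGX : G * X = 0) (hXG : X * G = 0) : IsMP (A + G) (X + S) := by
  obtain ⟨hX1, hX2, hX3, hX4⟩ := hX
  obtain ⟨hS1, hS2, hS3, hS4⟩ := hS
  have hleft : (A + G) * (X + S) = A * X + G * S := by
    simp [Matrix.add_mul, Matrix.mul_add, hAS, hGX]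
  have hright : (X + S) * (A + G) = X * A + S * G := by
    simp [Matrix.add_mul, Matrix.mul_add, hSA, hXG]
  refine ⟨?_, ?_, ?_, ?_⟩
  · rw [hleft, Matrix.add_mul, Matrix.mul_add, Matrix.mul_add, hX1, hS1, Matrix.mul_assoc A,
      hXG, Matrix.mul_assoc G, hSA]
    simp
  · rw [hright, Matrix.add_mul, Matrix.mul_add, Matrix.mul_add, hX2, hS2, Matrix.mul_assoc X,
      hAS, Matrix.mul_assoc S, hGX]
    simp
  · rw [hleft, conjTranspose_add, hX3, hS3]
  · rw [hright, conjTranspose_add, hX4, hS4]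

end IsMP

theorem isMP_sum_smul_vecMulVec {m n : ℕ} {ι : Type*} [Fintype ι] [DecidableEq ι]
    (f : ι → Fin n → ℂ) (g : ι → Fin m → ℂ)
    (hf : ∀ k l, star (f k) ⬝ᵥ f l = if k = l then 1 else 0)
    (hg : ∀ k l, star (g k) ⬝ᵥ g l = if k = l then 1 else 0)
    (d : ι → ℂ) (hd : ∀ k, d k ≠ 0) :
    IsMP (∑ k, d k • vecMulVec (g k) (star (f k)))
      (∑ k, (d k)⁻¹ • vecMulVec (f k) (star (g k))) := by
  have hGS := sum_smul_vecMulVec_mul_sum_smul_vecMulVec d (fun k => (d k)⁻¹) g f f g hf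
  have hSG := sum_smul_vecMulVec_mul_sum_smul_vecMulVec (fun k => (d k)⁻¹) d f g g f hg
  simp only [mul_inv_cancel₀ (hd _), inv_mul_cancel₀ (hd _), one_smul] at hGS hSG
  refine ⟨?_, ?_, ?_, ?_⟩
  · rw [hGS, ← Finset.sum_congr rfl fun k _ => one_smul ℂ (vecMulVec (g k) (star (g k))),
      sum_smul_vecMulVec_mul_sum_smul_vecMulVec _ _ _ _ _ _ hg]
    simp
  · rw [hSG, ← Finset.sum_congr rfl fun k _ => one_smul ℂ (vecMulVec (f k) (star (f k))),
      sum_smul_vecMulVec_mul_sum_smul_vecMulVec _ _ _ _ _ _ hf]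
    simp
  · rw [hGS]; exact isHermitian_sum_vecMulVec_star g
  · rw [hSG]; exact isHermitian_sum_vecMulVec_star f

theorem stmt10_general {m n r q' : ℕ} (A : Matrix (Fin m) (Fin n) ℂ)
    (f : Fin (q' - r) → Fin n → ℂ) (g : Fin (q' - r) → Fin m → ℂ)
    (hf : ∀ k l, star (f k) ⬝ᵥ f l = if k = l then 1 else 0)
    (hg : ∀ k l, star (g k) ⬝ᵥ g l = if k = l then 1 else 0)
    (hfN : ∀ k, A.mulVec (f k) = 0) (hgN : ∀ k, Aᴴ.mulVec (g k) = 0)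
    (d : Fin (q' - r) → ℂ) (hd : ∀ k, d k ≠ 0)
    (X Y : Matrix (Fin n) (Fin m) ℂ)
    (hX : IsMP A X)
    (hY : IsMP (A + ∑ k, d k • vecMulVec (g k) (star (f k))) Y) :
    X = Y - ∑ k, (d k)⁻¹ • vecMulVec (f k) (star (g k)) := by
  have hgA : ∀ k, star (g k) ᵥ* A = 0 := fun k => by
    simpa [hgN k] using (star_mulVec Aᴴ (g k)).symm
  have hsum := hX.add_of_mul_eq_zero (isMP_sum_smul_vecMulVec f g hf hg d hd)
    (mul_sum_smul_vecMulVec_eq_zero _ _ _ hfN) (sum_smul_vecMulVec_mul_eq_zero _ _ _ hgA)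
    (sum_smul_vecMulVec_mul_eq_zero _ _ _ fun k => hX.star_vecMul_eq_zero (hfN k))
    (mul_sum_smul_vecMulVec_eq_zero _ _ _ fun k => hX.mulVec_eq_zero (hgN k))
  rw [hY.unique hsum, add_sub_cancel_right]

theorem stmt10 {m n r q' : ℕ} (A : Matrix (Fin m) (Fin n) ℂ)
    (hr : A.rank = r) (hrq : r ≤ q') (hq : q' ≤ min m n)
    (f : Fin (q' - r) → Fin n → ℂ) (g : Fin (q' - r) → Fin m → ℂ)
    (hf : ∀ k l, star (f k) ⬝ᵥ f l = if k = l then 1 else 0)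
    (hg : ∀ k l, star (g k) ⬝ᵥ g l = if k = l then 1 else 0)
    (hfN : ∀ k, A.mulVec (f k) = 0) (hgN : ∀ k, Aᴴ.mulVec (g k) = 0)
    (d : Fin (q' - r) → ℂ) (hd : ∀ k, d k ≠ 0)
    (X Y : Matrix (Fin n) (Fin m) ℂ)
    (hX : IsMP A X)
    (hY : IsMP (A + ∑ k, d k • vecMulVec (g k) (star (f k))) Y) :
    X = Y - ∑ k, (d k)⁻¹ • vecMulVec (f k) (star (g k)) :=
  stmt10_general A f g hf hg hfN hgN d hd X Y hX hY
end
end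

section
/- Let A and B be n×n complex matrices with R(B*) = N(A) and R(B) ⊆ N(A*). Then A + B is invertible and A† = (A + B)^{-1} − B†. -/
/-!
Let `P = A†A` and `Q = B†B`, the orthogonal projections onto `R(A*)` and `R(B*)`. The hypotheses
say `A*B = 0` and `AB* = 0`, whence `A†B = 0`, `B†A = 0` and `PQ = 0`. As `1 - P` maps into
`N(A) = R(B*)`, on which `Q` is the identity, `Q(1 - P) = 1 - P`; together with `PQ = 0` and
self-adjointness this forces `P + Q = 1`. Hence `(A† + B†)(A + B) = P + Q = 1`.
-/

noncomputable section
open Matrix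

namespace Matrix

variable {R : Type*} [CommSemiring R] {l m n : Type*} [Fintype m] [Fintype n]

theorem mul_eq_zero_iff_range_mulVecLin_le_ker (M : Matrix l m R) (N : Matrix m n R) :
    M * N = 0 ↔ LinearMap.range N.mulVecLin ≤ LinearMap.ker M.mulVecLin := by
  rw [LinearMap.range_le_ker_iff, ← mulVecLin_mul, ext_iff_mulVec, LinearMap.ext_iff]
  simp

theorem exists_mul_eq_of_range_mulVecLin_le {M : Matrix l n R} {N : Matrix l m R}
    (h : LinearMap.range M.mulVecLin ≤ LinearMap.range N.mulVecLin) :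
    ∃ Y : Matrix m n R, N * Y = M := by
  have hcol : ∀ j, ∃ y, N *ᵥ y = M.col j := fun j =>
    h (by rw [range_mulVecLin]; exact Submodule.subset_span ⟨j, rfl⟩)
  choose y hy using hcol
  refine ⟨(of y)ᵀ, ?_⟩
  ext i j
  exact congrFun (hy j) i

end Matrix

theorem add_eq_one_of_mul_eq_zero_of_mul_one_sub_eq {R : Type*} [Ring R] [StarRing R] {p q : R}
    (hp : IsSelfAdjoint p) (hq : IsSelfAdjoint q) (hpq : p * q = 0) (h : q * (1 - p) = 1 - p) :
    p + q = 1 := by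
  have h' : (1 - p) * q = 1 - p := by
    simpa [hp.star_eq, hq.star_eq] using congrArg star h
  rw [sub_mul, one_mul, hpq, sub_zero] at h'
  rw [h', add_sub_cancel]

namespace IsMP

variable {m n : ℕ} {A : Matrix (Fin m) (Fin n) ℂ} {X : Matrix (Fin n) (Fin m) ℂ}

theorem mul_inv_eq_conjTranspose_mul (hX : IsMP A X) : A * X = Xᴴ * Aᴴ :=
  hX.2.2.1.symm.trans (conjTranspose_mul A X)

theorem inv_mul_eq_conjTranspose_mul (hX : IsMP A X) : X * A = Aᴴ * Xᴴ :=
  hX.2.2.2.symm.trans (conjTranspose_mul X A)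

theorem mul_one_sub_inv_mul (hX : IsMP A X) : A * (1 - X * A) = 0 := by
  rw [Matrix.mul_sub, Matrix.mul_one, ← Matrix.mul_assoc, hX.1, sub_self]

theorem inv_mul_mul_conjTranspose (hX : IsMP A X) : X * A * Aᴴ = Aᴴ := by
  rw [← hX.2.2.2, ← conjTranspose_mul, ← Matrix.mul_assoc, hX.1]

theorem inv_mul_mul_of_range_le {k : Type*} [Fintype k] {M : Matrix (Fin n) k ℂ}
    (hX : IsMP A X) (h : LinearMap.range M.mulVecLin ≤ LinearMap.range Aᴴ.mulVecLin) :
    X * A * M = M := by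
  obtain ⟨Y, rfl⟩ := exists_mul_eq_of_range_mulVecLin_le h
  rw [← Matrix.mul_assoc, hX.inv_mul_mul_conjTranspose]

theorem mul_eq_zero_of_conjTranspose_mul_eq_zero {k : Type*} [Fintype k]
    {B : Matrix (Fin m) k ℂ} (hX : IsMP A X) (h : Aᴴ * B = 0) : X * B = 0 :=
  calc X * B = X * (A * X) * B := by rw [← Matrix.mul_assoc, hX.2.1]
    _ = X * Xᴴ * (Aᴴ * B) := by simp only [hX.mul_inv_eq_conjTranspose_mul, Matrix.mul_assoc]
    _ = 0 := by rw [h, Matrix.mul_zero]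

theorem mul_inv_mul_eq_zero_of_mul_conjTranspose_eq_zero {k : Type*} [Fintype k]
    {C : Matrix k (Fin n) ℂ} (hX : IsMP A X) (h : C * Aᴴ = 0) : C * (X * A) = 0 := by
  rw [hX.inv_mul_eq_conjTranspose_mul, ← Matrix.mul_assoc, h, Matrix.zero_mul]

end IsMP

theorem stmt13 {n : ℕ} (A B : Matrix (Fin n) (Fin n) ℂ)
    (hRB : LinearMap.range Bᴴ.mulVecLin = LinearMap.ker A.mulVecLin)
    (hRB2 : LinearMap.range B.mulVecLin ≤ LinearMap.ker Aᴴ.mulVecLin)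
    (G H : Matrix (Fin n) (Fin n) ℂ) (hG : IsMP A G) (hH : IsMP B H) :
    IsUnit (A + B) ∧ G = (A + B)⁻¹ - H := by
  have hAB : Aᴴ * B = 0 := (mul_eq_zero_iff_range_mulVecLin_le_ker _ _).2 hRB2
  have hBA : Bᴴ * A = 0 := by simpa using congrArg conjTranspose hAB
  have hABh : A * Bᴴ = 0 := (mul_eq_zero_iff_range_mulVecLin_le_ker _ _).2 hRB.le
  have hGB : G * B = 0 := hG.mul_eq_zero_of_conjTranspose_mul_eq_zero hAB
  have hHA : H * A = 0 := hH.mul_eq_zero_of_conjTranspose_mul_eq_zero hBA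
  have hproj : G * A + H * B = 1 := by
    refine add_eq_one_of_mul_eq_zero_of_mul_one_sub_eq hG.2.2.2 hH.2.2.2 ?_ ?_
    · rw [Matrix.mul_assoc, hH.mul_inv_mul_eq_zero_of_mul_conjTranspose_eq_zero hABh,
        Matrix.mul_zero]
    · refine hH.inv_mul_mul_of_range_le (hRB ▸ ?_)
      exact (mul_eq_zero_iff_range_mulVecLin_le_ker _ _).1 hG.mul_one_sub_inv_mul
  have hinv : (G + H) * (A + B) = 1 := by
    rw [add_mul, mul_add, mul_add, hGB, hHA, add_zero, zero_add, hproj]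
  refine ⟨(isUnit_iff_isUnit_det _).2 (isUnit_det_of_left_inverse hinv), ?_⟩
  rw [inv_eq_left_inv hinv, add_sub_cancel_right]
end
end

section
/- Let n ≥ 2 be even and let C_{1,1} = circ(1,1,0,...,0) be the n×n circulant matrix with first row (1,1,0,...,0). Let v = (1,−1,1,−1,...,1,−1) ∈ ℝⁿ and let w ∈ ℝⁿ be defined by w(k) = (−1)^{k+1}(n² − (2k−1)n + 2) for k = 1,...,n. Then C_{1,1} + v vᵗ = circ(2,0,1,−1,...,1,−1) is invertible with inverse (1/(2n²)) circ(w). -/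
noncomputable section
open Matrix

/-- The circulant matrix with first row `c`; each subsequent row is the
cyclic right shift of the previous one. -/
def circ {n : ℕ} {α : Type*} (c : Fin n → α) : Matrix (Fin n) (Fin n) α :=
  Matrix.of fun i j => c (j - i)

/-!
Matrices `circ c` multiply by cyclic convolution of their first rows, so it suffices to show
that the first row `δ₀ + δ₁ + s` of `C_{1,1} + vvᵗ`, with `s j = (-1)^j`, convolved with
`w = s · p`, `p j = n² - (2j+1)n + 2`, is `2n² δ₀`. Since `n` is even, `s` is a character of
`ℤ/n`; hence `vvᵗ = circ s` and `s ⋆ (s · p) = (∑ p) s = 2n s`. The shifts contribute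
`w m + w (m - 1)`, which is `-2n s m` for `m ≠ 0` because `p` drops by `2n` at each step, and
`2n² - 2n` at `m = 0`, where the index wraps around to `n - 1`.
-/

section NegOnePow

variable {R : Type*} [Monoid R] [HasDistribNeg R] {n : ℕ}

theorem neg_one_pow_val_add (heven : Even n) (a b : Fin n) :
    (-1 : R) ^ ((a + b : Fin n) : ℕ) = (-1) ^ (a : ℕ) * (-1) ^ (b : ℕ) := by
  rw [Fin.val_add, ← pow_add, ← Nat.mod_add_div ((a : ℕ) + b) n, pow_add, pow_mul,
    heven.neg_one_pow, one_pow, mul_one, Nat.mod_add_div]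

theorem neg_one_pow_mul_self (k : ℕ) : (-1 : R) ^ k * (-1) ^ k = 1 := by
  rw [← pow_add]
  exact Even.neg_one_pow ⟨k, rfl⟩

theorem neg_one_pow_val_sub [NeZero n] (heven : Even n) (a b : Fin n) :
    (-1 : R) ^ ((b - a : Fin n) : ℕ) = (-1) ^ (a : ℕ) * (-1) ^ (b : ℕ) := by
  calc (-1 : R) ^ ((b - a : Fin n) : ℕ)
      = (-1) ^ ((b - a : Fin n) : ℕ) * ((-1) ^ (a : ℕ) * (-1) ^ (a : ℕ)) := by
        rw [neg_one_pow_mul_self, mul_one]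
    _ = (-1) ^ (a : ℕ) * (-1) ^ (b : ℕ) := by
        rw [← mul_assoc, ← neg_one_pow_val_add heven, sub_add_cancel]
        exact ((Commute.refl (-1 : R)).pow_pow _ _).eq

end NegOnePow

section Circ

variable {R : Type*} {n : ℕ}

theorem circ_eq_transpose_circulant (c : Fin n → R) : circ c = (circulant c)ᵀ := rfl

theorem circ_add [Add R] (c d : Fin n → R) : circ (c + d) = circ c + circ d := rfl

theorem circ_mul [CommSemiring R] [NeZero n] (c d : Fin n → R) :
    circ c * circ d = circ fun m => ∑ k, c k * d (m - k) := by
  rw [circ_eq_transpose_circulant, circ_eq_transpose_circulant, ← transpose_mul,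
    Fin.circulant_mul_comm, Fin.circulant_mul, circ_eq_transpose_circulant]
  congr 2
  funext m
  exact Fintype.sum_equiv (Equiv.subLeft m) _ _ fun k => by simp [mul_comm]

theorem circ_single_zero [Semiring R] [NeZero n] (r : R) :
    circ (Pi.single 0 r : Fin n → R) = r • 1 := by
  ext i j
  simp [circ, Pi.single_apply, one_apply, sub_eq_zero, eq_comm]

theorem circ_single_mul [CommSemiring R] [NeZero n] (i : Fin n) (r : R) (d : Fin n → R) :
    circ (Pi.single i r) * circ d = circ fun m => r * d (m - i) := by
  simp [circ_mul, Pi.single_apply]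

theorem vecMulVec_neg_one_pow [Monoid R] [HasDistribNeg R] [NeZero n] (heven : Even n) :
    vecMulVec (fun j : Fin n => (-1 : R) ^ (j : ℕ)) (fun j : Fin n => (-1) ^ (j : ℕ)) =
      circ fun j => (-1 : R) ^ (j : ℕ) := by
  ext i j
  exact (neg_one_pow_val_sub heven i j).symm

theorem circ_neg_one_pow_mul [CommRing R] [NeZero n] (heven : Even n) (p : Fin n → R) :
    circ (fun j => (-1 : R) ^ (j : ℕ)) * circ (fun j => (-1) ^ (j : ℕ) * p j) =
      circ fun m => (-1) ^ (m : ℕ) * ∑ j, p j := by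
  rw [circ_mul]
  congr 1
  funext m
  calc ∑ k : Fin n, (-1 : R) ^ (k : ℕ) * ((-1) ^ ((m - k : Fin n) : ℕ) * p (m - k))
      = ∑ k, (-1) ^ (m : ℕ) * p (m - k) := by
        refine Finset.sum_congr rfl fun k _ => ?_
        rw [neg_one_pow_val_sub heven, ← mul_assoc, ← mul_assoc, neg_one_pow_mul_self, one_mul]
    _ = (-1) ^ (m : ℕ) * ∑ j, p j := by
        rw [← Finset.mul_sum]
        exact congrArg _ (Fintype.sum_equiv (Equiv.subLeft m) _ _ fun _ => rfl)

end Circ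

theorem sum_sq_sub_odd_mul_add_two {R : Type*} [CommRing R] (n : ℕ) :
    ∑ j : Fin n, ((n : R) ^ 2 - (2 * (j : ℕ) + 1) * n + 2) = 2 * (n : R) := by
  have sum_odd : ∀ k : ℕ, ∑ j : Fin k, (2 * ((j : ℕ) : R) + 1) = (k : R) ^ 2 := by
    intro k
    induction k with
    | zero => simp
    | succ k ih =>
      simp only [Fin.sum_univ_castSucc, Fin.val_castSucc, ih, Fin.val_last]; push_cast; ring
  calc ∑ j : Fin n, ((n : R) ^ 2 - (2 * (j : ℕ) + 1) * n + 2)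
      = ∑ j : Fin n, (((n : R) ^ 2 + 2) - n * (2 * (j : ℕ) + 1)) :=
        Finset.sum_congr rfl fun _ _ => by ring
    _ = n * ((n : R) ^ 2 + 2) - n * n ^ 2 := by
        rw [Finset.sum_sub_distrib, ← Finset.mul_sum, sum_odd, Finset.sum_const, Finset.card_univ,
          Fintype.card_fin, nsmul_eq_mul]
    _ = 2 * n := by ring

section InverseRow

variable {R : Type*} [CommRing R] {n : ℕ} [NeZero n] (heven : Even n)
  (w : Fin n → R) (hw : ∀ j, w j = (-1) ^ (j : ℕ) * ((n : R) ^ 2 - (2 * (j : ℕ) + 1) * n + 2))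
include heven hw

theorem inverseRow_add_inverseRow_sub_one (m : Fin n) :
    w m + w (m - 1) + (-1) ^ (m : ℕ) * (2 * n) =
      (Pi.single 0 (2 * (n : R) ^ 2) : Fin n → R) m := by
  rcases eq_or_ne m 0 with rfl | hm
  · have hlast : ((0 - 1 : Fin n) : ℕ) = n - 1 := by
      obtain ⟨k, rfl⟩ := Nat.exists_eq_succ_of_ne_zero (NeZero.ne n)
      simp
    have hodd : Odd (n - 1) := Nat.Even.sub_odd NeZero.one_le heven odd_one
    rw [hw, hw, hlast, hodd.neg_one_pow, Nat.cast_sub NeZero.one_le, Fin.val_zero,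
      Pi.single_eq_same]
    push_cast
    ring
  · obtain ⟨t, ht⟩ : ∃ t, (m : ℕ) = t + 1 :=
      Nat.exists_eq_succ_of_ne_zero (Fin.val_ne_zero_iff.mpr hm)
    rw [hw, hw, Fin.val_sub_one_of_ne_zero hm, ht, Pi.single_eq_of_ne hm]
    push_cast
    ring

theorem circ_mul_circ_inverseRow :
    circ ((Pi.single 0 1 + Pi.single 1 1 : Fin n → R) + fun j : Fin n => (-1) ^ (j : ℕ)) * circ w =
      (2 * (n : R) ^ 2) • 1 := by
  have hw' : w = fun j : Fin n => (-1) ^ (j : ℕ) * ((n : R) ^ 2 - (2 * (j : ℕ) + 1) * n + 2) :=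
    funext hw
  rw [circ_add, circ_add, add_mul, add_mul, circ_single_mul, circ_single_mul, hw',
    circ_neg_one_pow_mul heven, sum_sq_sub_odd_mul_add_two, ← hw', ← circ_add, ← circ_add,
    ← circ_single_zero]
  congr 1
  funext m
  simpa using inverseRow_add_inverseRow_sub_one heven w hw m

end InverseRow

theorem ite_val_eq_zero_or_one_eq_single_add_single {R : Type*} [AddMonoidWithOne R] {n : ℕ}
    [NeZero n] (hn : 2 ≤ n) :
    (fun j : Fin n => if (j : ℕ) = 0 ∨ (j : ℕ) = 1 then (1 : R) else 0) =
      Pi.single 0 1 + Pi.single 1 1 := by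
  have hone : ((1 : Fin n) : ℕ) = 1 := by rw [Fin.val_one', Nat.mod_eq_of_lt hn]
  funext j
  simp only [Pi.add_apply, Pi.single_apply, Fin.ext_iff, hone, Fin.val_zero]
  split_ifs <;> first | omega | norm_num

theorem stmt14 {n : ℕ} (hn : 2 ≤ n) (heven : Even n)
    (v : Fin n → ℝ) (hv : ∀ j, v j = (-1 : ℝ)^(j : ℕ))
    (w : Fin n → ℝ)
    (hw : ∀ j, w j = (-1 : ℝ)^(j : ℕ) * ((n : ℝ)^2 - (2*((j : ℕ) : ℝ)+1)*(n : ℝ) + 2)) :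
    circ (fun j => if (j : ℕ) = 0 ∨ (j : ℕ) = 1 then (1 : ℝ) else 0) + vecMulVec v v =
      circ (fun j => if (j : ℕ) = 0 then (2 : ℝ) else if (j : ℕ) = 1 then 0
        else (-1 : ℝ)^(j : ℕ)) ∧
    IsUnit (circ (fun j => if (j : ℕ) = 0 ∨ (j : ℕ) = 1 then (1 : ℝ) else 0) + vecMulVec v v) ∧
    (circ (fun j => if (j : ℕ) = 0 ∨ (j : ℕ) = 1 then (1 : ℝ) else 0) + vecMulVec v v)⁻¹ =
      (1/(2*(n : ℝ)^2)) • circ w := by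
  have : NeZero n := ⟨by omega⟩
  obtain rfl : v = fun j : Fin n => (-1 : ℝ) ^ (j : ℕ) := funext hv
  rw [vecMulVec_neg_one_pow heven, ← circ_add]
  have hright := congrArg ((1 / (2 * (n : ℝ) ^ 2)) • ·) (circ_mul_circ_inverseRow heven w hw)
  have hn0 : 2 * (n : ℝ) ^ 2 ≠ 0 := by positivity
  rw [← ite_val_eq_zero_or_one_eq_single_add_single hn, smul_smul, one_div_mul_cancel hn0,
    one_smul, ← mul_smul_comm] at hright
  refine ⟨congrArg circ (funext fun j => ?_), (isUnit_iff_isUnit_det _).mpr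
    (isUnit_det_of_right_inverse hright), inv_eq_right_inv hright⟩
  rw [Pi.add_apply]
  by_cases h0 : (j : ℕ) = 0
  · rw [if_pos (Or.inl h0), if_pos h0, h0]
    norm_num
  by_cases h1 : (j : ℕ) = 1
  · rw [if_pos (Or.inr h1), if_neg h0, if_pos h1, h1]
    norm_num
  · rw [if_neg (not_or.mpr ⟨h0, h1⟩), if_neg h0, if_neg h1, zero_add]
end
end

section
/- Let k, q be positive integers, n = q(k+1), and let C be the n×n circulant matrix circ(k,−1,...,−1, k,−1,...,−1, ..., k,−1,...,−1) whose first row has entry k in positions 1, k+2, 2k+3, ..., n−k and entry −1 elsewhere. Then C² = nC and C† = (1/n²) C. -/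
noncomputable section
open Matrix

/-!
Let `P` be the 0/1 matrix of the relation `i ≡ j (mod k+1)` and `J` the all-ones matrix, so that
`C = (k+1) P - J`. Every residue class has `q` elements, hence `P² = q P`, `P J = J P = q J` and
`J² = n J`, which combine to `C² = n C`. A Hermitian matrix with `C² = c C` for a real `c ≠ 0`
has Moore–Penrose inverse `C / c²`.
-/

open Finset

namespace Matrix

variable {ι κ R : Type*}

def fiberIndicator (R : Type*) [Zero R] [One R] [DecidableEq κ] (f : ι → κ) : Matrix ι ι R :=
  of fun i j => if f i = f j then 1 else 0

def allOnes (R : Type*) [One R] : Matrix ι ι R := of fun _ _ => 1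

section Products

variable [Fintype ι] [CommRing R]

lemma allOnes_mul_allOnes : allOnes R * allOnes R = (Fintype.card ι : R) • allOnes (ι := ι) R := by
  ext i j
  simp [allOnes, mul_apply]

variable [DecidableEq κ] {f : ι → κ} {q : ℕ}

lemma fiberIndicator_mul_self (hf : ∀ y, #{x | f x = y} = q) :
    fiberIndicator R f * fiberIndicator R f = (q : R) • fiberIndicator R f := by
  ext i j
  have hfiber : #{s | f i = f s ∧ f s = f j} = if f i = f j then q else 0 := by
    split_ifs with hij
    · rw [← hf (f i)]; congr 1; ext s; grind
    · simp only [card_eq_zero, filter_eq_empty_iff]; grind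
  simp only [fiberIndicator, mul_apply, of_apply, smul_apply, ite_zero_mul_ite_zero, mul_one,
    sum_boole, hfiber]
  split_ifs <;> simp

lemma fiberIndicator_mul_allOnes (hf : ∀ y, #{x | f x = y} = q) :
    fiberIndicator R f * allOnes R = (q : R) • allOnes R := by
  ext i j
  simp [fiberIndicator, allOnes, mul_apply, ← hf (f i), eq_comm]

lemma allOnes_mul_fiberIndicator (hf : ∀ y, #{x | f x = y} = q) :
    allOnes R * fiberIndicator R f = (q : R) • allOnes R := by
  ext i j
  simp [fiberIndicator, allOnes, mul_apply, ← hf (f j)]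

lemma card_smul_fiberIndicator_sub_allOnes_mul_self [Fintype κ] (hf : ∀ y, #{x | f x = y} = q) :
    ((Fintype.card κ : R) • fiberIndicator R f - allOnes R) *
        ((Fintype.card κ : R) • fiberIndicator R f - allOnes R) =
      ((q * Fintype.card κ : ℕ) : R) • ((Fintype.card κ : R) • fiberIndicator R f - allOnes R) := by
  have hcard : Fintype.card ι = q * Fintype.card κ := by
    rw [← card_univ, card_eq_sum_card_fiberwise fun x _ => mem_coe.2 (mem_univ (f x))]
    simp [hf, mul_comm]
  simp only [sub_mul, mul_sub, Matrix.smul_mul, Matrix.mul_smul, fiberIndicator_mul_self hf,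
    fiberIndicator_mul_allOnes hf, allOnes_mul_fiberIndicator hf, allOnes_mul_allOnes, hcard]
  push_cast
  module

end Products

lemma card_smul_fiberIndicator_sub_allOnes_isHermitian [Fintype κ] [DecidableEq κ] [CommRing R]
    [StarRing R] (f : ι → κ) :
    ((Fintype.card κ : R) • fiberIndicator R f - allOnes R).IsHermitian := by
  refine IsHermitian.sub (IsHermitian.smul ?_ (IsSelfAdjoint.natCast _)) ?_ <;> ext i j
  · by_cases h : f i = f j <;> simp [fiberIndicator, h, eq_comm]
  · simp [allOnes]

end Matrix

lemma Fin.card_filter_modNat_eq {q m : ℕ} (y : Fin m) : #{x : Fin (q * m) | x.modNat = y} = q := by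
  rw [card_equiv finProdFinEquiv.symm (t := univ ×ˢ {y}) (by simp [eq_comm])]
  simp

lemma Fin.dvd_val_sub_iff_modNat_eq {q m : ℕ} (i j : Fin (q * m)) :
    m ∣ ((j - i : Fin (q * m)) : ℕ) ↔ i.modNat = j.modNat := by
  rw [Fin.val_sub, Nat.dvd_mod_iff (dvd_mul_left m q), Fin.ext_iff, Fin.coe_modNat,
    Fin.coe_modNat, ← ZMod.natCast_eq_natCast_iff', ← ZMod.natCast_eq_zero_iff,
    Nat.cast_add, Nat.cast_sub i.is_lt.le]
  simp [neg_add_eq_zero]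

lemma isMP_inv_sq_smul_of_mul_self_eq_smul {n : ℕ} {A : Matrix (Fin n) (Fin n) ℂ}
    (hA : A.IsHermitian) {c : ℂ} (hc : c ≠ 0) (hc_sa : IsSelfAdjoint c) (h : A * A = c • A) :
    IsMP A ((1 / c ^ 2) • A) := by
  have hAX : A * ((1 / c ^ 2) • A) = (1 / c) • A := by
    rw [Matrix.mul_smul, h, smul_smul]; congr 1; field_simp
  have hXA : (1 / c ^ 2) • A * A = (1 / c) • A := by
    rw [Matrix.smul_mul, h, smul_smul]; congr 1; field_simp
  have hinv : IsSelfAdjoint (1 / c) := (IsSelfAdjoint.one ℂ).div hc_sa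
  refine ⟨?_, ?_, ?_, ?_⟩
  · rw [hAX, Matrix.smul_mul, h, smul_smul, one_div_mul_cancel hc, one_smul]
  · rw [hXA, Matrix.smul_mul, Matrix.mul_smul, h, smul_smul, smul_smul]; congr 1; field_simp
  · rw [hAX]; exact hA.smul hinv
  · rw [hXA]; exact hA.smul hinv

theorem stmt18_general {k q : ℕ} (hq : 0 < q)
    (C : Matrix (Fin (q*(k+1))) (Fin (q*(k+1))) ℂ)
    (hC : C = circ (fun j => if (k+1) ∣ (j : ℕ) then (k : ℂ) else -1)) :
    C * C = ((q*(k+1) : ℕ) : ℂ) • C ∧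
    IsMP C ((1/((q*(k+1) : ℕ) : ℂ)^2) • C) := by
  have hC' : C = ((k + 1 : ℕ) : ℂ) • fiberIndicator ℂ Fin.modNat - allOnes ℂ := by
    ext i j
    by_cases h : i.modNat = j.modNat <;>
      simp [hC, circ, fiberIndicator, allOnes, Fin.dvd_val_sub_iff_modNat_eq, h]
  have hsq : C * C = ((q * (k + 1) : ℕ) : ℂ) • C := by
    have := card_smul_fiberIndicator_sub_allOnes_mul_self (R := ℂ) (Fin.card_filter_modNat_eq (q := q) (m := k + 1))
    rw [Fintype.card_fin] at this
    rwa [hC']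
  have hherm : C.IsHermitian := by
    simpa [hC'] using card_smul_fiberIndicator_sub_allOnes_isHermitian (R := ℂ)
      (Fin.modNat : Fin (q * (k + 1)) → Fin (k + 1))
  exact ⟨hsq, isMP_inv_sq_smul_of_mul_self_eq_smul hherm (Nat.cast_ne_zero.2 (by positivity))
    (IsSelfAdjoint.natCast _) hsq⟩

theorem stmt18 {k q : ℕ} (hk : 0 < k) (hq : 0 < q)
    (C : Matrix (Fin (q*(k+1))) (Fin (q*(k+1))) ℂ)
    (hC : C = circ (fun j => if (k+1) ∣ (j : ℕ) then (k : ℂ) else -1)) :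
    C * C = ((q*(k+1) : ℕ) : ℂ) • C ∧
    IsMP C ((1/((q*(k+1) : ℕ) : ℂ)^2) • C) :=
  stmt18_general hq C hC
end
end

section
/- Let n ≥ 5 be odd and let D be the n×n distance matrix of the wheel graph W(n) with center labeled 1 and rim vertices 2,...,n, so that D = [[0, eᵗ],[e, circ(u)]] with u = (0,1,2,...,2,1) ∈ ℝ^{n−1}. Let a = (0,−1,1,...,−1,1) ∈ ℝⁿ. Then the null space of D is span{a}, and D† = (D + a aᵗ)^{-1} − (1/(n−1)²) a aᵗ. -/
/-!
Write `P = a aᵀ` and `M = D + P`. Since `D` is symmetric and `D a = 0`, we have `D P = P D = 0`,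
so `M P = P M = ‖a‖² P`; if moreover `ker D = span {a}`, then `M` is invertible. Consequently
`D M⁻¹ = M⁻¹ D = 1 - P / ‖a‖²` is the orthogonal projection onto `a⊥`, and the four Penrose
equations for `M⁻¹ - P / ‖a‖⁴` follow; for the wheel, `‖a‖² = n - 1`.

The kernel of the wheel matrix (centre `0`, rim `1, …, n - 1`): on the rim `D v = 0` reads
`v (i - 1) + 2 v i + v (i + 1) = v 0`, whose solutions are `v 0 / 4 + (-1)^i (A + B i)`.
Closing up the rim, a cycle of even length `n - 1`, forces `B = 0`, and the centre row, which
says that the rim sums to zero, forces `v 0 = 0`.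
-/

noncomputable section
open Matrix

/-- `X` is the Moore–Penrose inverse of the real matrix `A`. -/
def IsMPR {m n : ℕ} (A : Matrix (Fin m) (Fin n) ℝ) (X : Matrix (Fin n) (Fin m) ℝ) : Prop :=
  A * X * A = A ∧ X * A * X = X ∧ (A * X)ᵀ = A * X ∧ (X * A)ᵀ = X * A

section EigenmatrixInverse

variable {ι K : Type*} [Fintype ι] [DecidableEq ι] [Field K] {M P : Matrix ι ι K} {s : K}

lemma inv_mul_eq_inv_smul_of_mul_eq_smul (hM : IsUnit M) (h : M * P = s • P) :
    M⁻¹ * P = s⁻¹ • P := by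
  have hP : P = s • (M⁻¹ * P) := by
    rw [← Matrix.mul_smul, ← h, ← Matrix.mul_assoc,
      nonsing_inv_mul _ ((isUnit_iff_isUnit_det M).mp hM), Matrix.one_mul]
  rcases eq_or_ne s 0 with rfl | hs
  · rw [zero_smul] at hP
    rw [hP, Matrix.mul_zero, smul_zero]
  · conv_rhs => rw [hP, smul_smul, inv_mul_cancel₀ hs, one_smul]

lemma mul_inv_eq_inv_smul_of_mul_eq_smul (hM : IsUnit M) (h : P * M = s • P) :
    P * M⁻¹ = s⁻¹ • P := by
  have hP : P = s • (P * M⁻¹) := by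
    rw [← Matrix.smul_mul, ← h, Matrix.mul_assoc,
      mul_nonsing_inv _ ((isUnit_iff_isUnit_det M).mp hM), Matrix.mul_one]
  rcases eq_or_ne s 0 with rfl | hs
  · rw [zero_smul] at hP
    rw [hP, Matrix.zero_mul, smul_zero]
  · conv_rhs => rw [hP, smul_smul, inv_mul_cancel₀ hs, one_smul]

end EigenmatrixInverse

section RankOne

variable {ι R : Type*} [Fintype ι] [CommRing R] {A : Matrix ι ι R} {a : ι → R}

lemma mul_vecMulVec_self_eq_zero (hAa : A *ᵥ a = 0) : A * vecMulVec a a = 0 := by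
  rw [mul_vecMulVec, hAa, zero_vecMulVec]

lemma vecMulVec_self_mul_eq_zero (hA : Aᵀ = A) (hAa : A *ᵥ a = 0) : vecMulVec a a * A = 0 := by
  rw [vecMulVec_mul, ← mulVec_transpose, hA, hAa, vecMulVec_zero]

lemma vecMulVec_self_mul_self (a : ι → R) :
    vecMulVec a a * vecMulVec a a = (a ⬝ᵥ a) • vecMulVec a a := by
  rw [vecMulVec_mul_vecMulVec, vecMulVec_smul]

lemma ker_mulVecLin_eq_span_singleton (hAa : A *ᵥ a = 0)
    (hker : ∀ v, A *ᵥ v = 0 → ∃ t : R, v = t • a) :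
    LinearMap.ker A.mulVecLin = Submodule.span R {a} := by
  ext v
  rw [LinearMap.mem_ker, mulVecLin_apply, Submodule.mem_span_singleton]
  constructor
  · intro hv
    obtain ⟨t, rfl⟩ := hker v hv
    exact ⟨t, rfl⟩
  · rintro ⟨t, rfl⟩
    rw [mulVec_smul, hAa, smul_zero]

end RankOne

section OrderedField

variable {ι K : Type*} [Fintype ι] [DecidableEq ι] [Field K] [LinearOrder K] [IsStrictOrderedRing K]
  {A : Matrix ι ι K} {a : ι → K}

lemma isUnit_add_vecMulVec_self (hA : Aᵀ = A) (hAa : A *ᵥ a = 0)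
    (hker : ∀ v, A *ᵥ v = 0 → ∃ t : K, v = t • a) : IsUnit (A + vecMulVec a a) := by
  rw [← mulVec_injective_iff_isUnit, ← coe_mulVecLin, ← LinearMap.ker_eq_bot,
    ker_mulVecLin_eq_bot_iff]
  intro w hw
  have hAw : A *ᵥ w = -(a ⬝ᵥ w) • a := by
    rw [add_mulVec, vecMulVec_mulVec] at hw
    simpa [eq_neg_iff_add_eq_zero] using hw
  have haw : a ⬝ᵥ w = 0 := by
    have h : (a ⬝ᵥ w) * (a ⬝ᵥ a) = 0 := by
      have := congrArg (a ⬝ᵥ ·) hAw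
      rw [dotProduct_mulVec, ← mulVec_transpose, hA, hAa, zero_dotProduct, dotProduct_smul] at this
      simpa using this.symm
    rcases mul_eq_zero.mp h with h | h
    · exact h
    · rw [dotProduct_self_eq_zero.mp h, zero_dotProduct]
  obtain ⟨t, rfl⟩ := hker w (by rw [hAw, haw, neg_zero, zero_smul])
  rw [dotProduct_smul, smul_eq_mul, mul_eq_zero] at haw
  rcases haw with rfl | h
  · exact zero_smul _ _
  · rw [dotProduct_self_eq_zero.mp h, smul_zero]

end OrderedField

section MoorePenrose

variable {m n : ℕ}

theorem IsMPR.unique {A : Matrix (Fin m) (Fin n) ℝ} {X Y : Matrix (Fin n) (Fin m) ℝ}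
    (hX : IsMPR A X) (hY : IsMPR A Y) : X = Y := by
  obtain ⟨hx1, hx2, hx3, hx4⟩ := hX
  obtain ⟨hy1, hy2, hy3, hy4⟩ := hY
  have hXY : X = X * A * Y := calc
    X = X * (A * X)ᵀ := by rw [hx3, ← Matrix.mul_assoc, hx2]
    _ = X * (A * Y * (A * X))ᵀ := by rw [← Matrix.mul_assoc, hy1]
    _ = X * A * Y := by
      rw [transpose_mul, hx3, hy3, ← Matrix.mul_assoc, ← Matrix.mul_assoc X A X, hx2,
        ← Matrix.mul_assoc]
  have hYX : Y = X * A * Y := calc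
    Y = (Y * A)ᵀ * Y := by rw [hy4, hy2]
    _ = (Y * A * (X * A))ᵀ * Y := by
      rw [← Matrix.mul_assoc, Matrix.mul_assoc Y A X, Matrix.mul_assoc Y, hx1]
    _ = X * A * Y := by rw [transpose_mul, hx4, hy4, Matrix.mul_assoc, hy2]
  rw [hXY, ← hYX]

variable {A : Matrix (Fin n) (Fin n) ℝ} {a : Fin n → ℝ}

lemma isMPR_inv_add_vecMulVec_self_sub (hA : Aᵀ = A) (hAa : A *ᵥ a = 0)
    (hM : IsUnit (A + vecMulVec a a)) :
    IsMPR A ((A + vecMulVec a a)⁻¹ - (1 / (a ⬝ᵥ a) ^ 2) • vecMulVec a a) := by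
  set P := vecMulVec a a
  set M := A + P
  set s := a ⬝ᵥ a
  have hAP : A * P = 0 := mul_vecMulVec_self_eq_zero hAa
  have hPA : P * A = 0 := vecMulVec_self_mul_eq_zero hA hAa
  have hPP : P * P = s • P := vecMulVec_self_mul_self a
  have hPt : Pᵀ = P := transpose_vecMulVec a a
  have hdet : IsUnit M.det := (isUnit_iff_isUnit_det M).mp hM
  have hMP : M⁻¹ * P = s⁻¹ • P :=
    inv_mul_eq_inv_smul_of_mul_eq_smul hM (by rw [Matrix.add_mul, hAP, hPP, zero_add])
  have hPM : P * M⁻¹ = s⁻¹ • P :=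
    mul_inv_eq_inv_smul_of_mul_eq_smul hM (by rw [Matrix.mul_add, hPA, hPP, zero_add])
  have hAeq : A = M - P := (add_sub_cancel_right A P).symm
  have hAY : A * (M⁻¹ - (1 / s ^ 2) • P) = 1 - s⁻¹ • P := by
    rw [Matrix.mul_sub, Matrix.mul_smul, hAP, smul_zero, sub_zero, hAeq, Matrix.sub_mul,
      mul_nonsing_inv _ hdet, hPM]
  have hYA : (M⁻¹ - (1 / s ^ 2) • P) * A = 1 - s⁻¹ • P := by
    rw [Matrix.sub_mul, Matrix.smul_mul, hPA, smul_zero, sub_zero, hAeq, Matrix.mul_sub,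
      nonsing_inv_mul _ hdet, hMP]
  have hPY : P * (M⁻¹ - (1 / s ^ 2) • P) = 0 := by
    rw [Matrix.mul_sub, Matrix.mul_smul, hPM, hPP, smul_smul, sub_eq_zero]
    congr 1
    rcases eq_or_ne s 0 with hs | hs
    · simp [hs]
    · field_simp
  refine ⟨?_, ?_, ?_, ?_⟩
  · rw [hAY, Matrix.sub_mul, Matrix.one_mul, Matrix.smul_mul, hPA, smul_zero, sub_zero]
  · rw [hYA, Matrix.sub_mul, Matrix.one_mul, Matrix.smul_mul, hPY, smul_zero, sub_zero]
  · rw [hAY, transpose_sub, transpose_one, transpose_smul, hPt]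
  · rw [hYA, transpose_sub, transpose_one, transpose_smul, hPt]

end MoorePenrose

lemma exists_closed_form_of_add_two_mul_add_eq {R : Type*} [CommRing R] {u : ℕ → R} {c : R}
    {N : ℕ} (h : ∀ k, k + 2 ≤ N → u k + 2 * u (k + 1) + u (k + 2) = 4 * c) :
    ∃ A B : R, ∀ k ≤ N, u k = c + (-1) ^ k * (A + B * k) := by
  refine ⟨u 0 - c, 2 * c - u 0 - u 1, fun k => ?_⟩
  induction k using Nat.twoStepInduction with
  | zero => intro; ring
  | one => intro; ring
  | more k ih₀ ih₁ =>
    intro hk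
    push_cast at ih₁ ⊢
    linear_combination h k hk - ih₀ (by omega) - 2 * ih₁ (by omega)

lemma exists_eq_mul_neg_one_pow_of_cyclic_add_two_mul_add_eq {u : ℕ → ℝ} {c : ℝ} {m : ℕ}
    (hm : 0 < m) (heven : Even m)
    (hrec : ∀ k, k + 2 ≤ m - 1 → u k + 2 * u (k + 1) + u (k + 2) = 4 * c)
    (hwrap : u (m - 1) + 2 * u 0 + u 1 = 4 * c) (hsum : ∑ k ∈ Finset.range m, u k = 0) :
    c = 0 ∧ ∃ A : ℝ, ∀ k < m, u k = A * (-1) ^ k := by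
  obtain ⟨A, B, hAB⟩ := exists_closed_form_of_add_two_mul_add_eq hrec
  have hodd : Odd (m - 1) := Nat.Even.sub_odd hm heven odd_one
  have hm2 : 2 ≤ m := by obtain ⟨r, rfl⟩ := heven; omega
  have hB : B = 0 := by
    have h0 := hAB 0 (by omega)
    have h1 := hAB 1 (by omega)
    have hlast := hAB (m - 1) le_rfl
    rw [hodd.neg_one_pow, Nat.cast_sub hm] at hlast
    have : B * m = 0 := by
      push_cast at h0 h1 hlast
      linear_combination -hwrap + hlast + 2 * h0 + h1
    exact (mul_eq_zero.mp this).resolve_right (by positivity)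
  have hu : ∀ k < m, u k = c + A * (-1) ^ k := fun k hk => by
    rw [hAB k (by omega), hB]
    ring
  have hc : m * c = 0 := by
    rw [← hsum, Finset.sum_congr rfl fun k hk => hu k (Finset.mem_range.mp hk),
      Finset.sum_add_distrib, ← Finset.mul_sum, neg_one_geom_sum, if_pos heven]
    simp
  exact ⟨(mul_eq_zero.mp hc).resolve_left (by positivity), A, fun k hk => by
    rw [hu k hk, (mul_eq_zero.mp hc).resolve_left (by positivity), zero_add]⟩

lemma neg_one_pow_eq_neg_of_odd_add {R : Type*} [Ring R] {p i : ℕ} (h : Odd (p + i)) :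
    (-1 : R) ^ p = -(-1) ^ i := by
  rcases Nat.even_or_odd i with hi | hi
  · rw [hi.neg_one_pow, ((Nat.odd_add.mp h).mpr hi).neg_one_pow]
  · rw [hi.neg_one_pow, ((Nat.odd_add'.mp h).mp hi).neg_one_pow, neg_neg]

section Wheel

variable {n : ℕ}

def wheelDist (n : ℕ) : Matrix (Fin n) (Fin n) ℝ :=
  Matrix.of fun i j : Fin n =>
    if i = j then 0
    else if (i : ℕ) = 0 ∨ (j : ℕ) = 0 then 1
    else if (i : ℕ) + 1 = (j : ℕ) ∨ (j : ℕ) + 1 = (i : ℕ) ∨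
      ((i : ℕ) = 1 ∧ (j : ℕ) = n - 1) ∨ ((j : ℕ) = 1 ∧ (i : ℕ) = n - 1) then 1 else 2

def wheelAlt (n : ℕ) : Fin n → ℝ := fun j => if (j : ℕ) = 0 then 0 else (-1) ^ (j : ℕ)

lemma wheelDist_transpose : (wheelDist n)ᵀ = wheelDist n := by
  ext i j
  simp only [wheelDist, transpose_apply, of_apply, Fin.ext_iff]
  split_ifs <;> first | rfl | omega

lemma wheelDist_mulVec_apply_zero [NeZero n] (v : Fin n → ℝ) :
    (wheelDist n *ᵥ v) 0 = ∑ j, v j - v 0 := by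
  have hrow : ∀ j, wheelDist n 0 j = 1 - if j = 0 then 1 else 0 := by
    intro j
    simp only [wheelDist, of_apply, Fin.ext_iff, Fin.val_zero, true_or, if_true]
    split_ifs <;> first | omega | norm_num
  simp [mulVec, dotProduct, hrow, sub_mul, Finset.sum_sub_distrib]

lemma wheelDist_mulVec_apply_of_ne_zero [NeZero n] (hn : 4 ≤ n) (v : Fin n → ℝ) {i p q : Fin n}
    (hi : (i : ℕ) ≠ 0) (hp : (p : ℕ) = if (i : ℕ) = 1 then n - 1 else (i : ℕ) - 1)
    (hq : (q : ℕ) = if (i : ℕ) = n - 1 then 1 else (i : ℕ) + 1) :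
    (wheelDist n *ᵥ v) i = 2 * ∑ j, v j - v 0 - 2 * v i - v p - v q := by
  have hrow : ∀ j, wheelDist n i j = 2 - (if j = 0 then 1 else 0) - (if j = i then 2 else 0)
      - (if j = p then 1 else 0) - (if j = q then 1 else 0) := by
    intro j
    simp only [wheelDist, of_apply, Fin.ext_iff, Fin.val_zero]
    have := j.isLt
    have := i.isLt
    split_ifs at hp hq ⊢ <;> first | omega | norm_num
  simp [mulVec, dotProduct, hrow, sub_mul, Finset.sum_sub_distrib, ite_mul, Finset.mul_sum]

lemma wheelAlt_zero [NeZero n] : wheelAlt n 0 = 0 := by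
  simp [wheelAlt]

lemma wheelAlt_of_ne_zero {j : Fin n} (hj : (j : ℕ) ≠ 0) : wheelAlt n j = (-1) ^ (j : ℕ) :=
  if_neg hj

lemma sum_wheelAlt (hodd : Odd n) : ∑ j, wheelAlt n j = 0 := by
  obtain ⟨m, rfl⟩ := hodd
  rw [Fin.sum_univ_succ, wheelAlt_zero, zero_add]
  simp only [wheelAlt, Fin.val_succ, Nat.add_one_ne_zero, if_false, pow_succ]
  rw [← Finset.sum_mul, Fin.sum_univ_eq_sum_range (fun k => (-1 : ℝ) ^ k), neg_one_geom_sum,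
    if_pos (even_two_mul m), zero_mul]

lemma wheelAlt_dotProduct_self [NeZero n] : wheelAlt n ⬝ᵥ wheelAlt n = n - 1 := by
  obtain ⟨m, rfl⟩ : ∃ m, n = m + 1 := ⟨n - 1, (Nat.succ_pred_eq_of_ne_zero NeZero.out).symm⟩
  simp [dotProduct, Fin.sum_univ_succ, wheelAlt, ← mul_pow]

lemma wheelAlt_add_wheelAlt_of_ne_zero (hodd : Odd n) {i p q : Fin n} (hi : (i : ℕ) ≠ 0)
    (hp : (p : ℕ) = if (i : ℕ) = 1 then n - 1 else (i : ℕ) - 1)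
    (hq : (q : ℕ) = if (i : ℕ) = n - 1 then 1 else (i : ℕ) + 1) :
    wheelAlt n p + wheelAlt n q = -2 * wheelAlt n i := by
  have := i.isLt
  rw [Nat.odd_iff] at hodd
  have hp0 : (p : ℕ) ≠ 0 := by split_ifs at hp <;> omega
  have hq0 : (q : ℕ) ≠ 0 := by split_ifs at hq <;> omega
  have hpi : Odd ((p : ℕ) + i) := by rw [Nat.odd_iff]; split_ifs at hp <;> omega
  have hqi : Odd ((q : ℕ) + i) := by rw [Nat.odd_iff]; split_ifs at hq <;> omega
  rw [wheelAlt_of_ne_zero hi, wheelAlt_of_ne_zero hp0, wheelAlt_of_ne_zero hq0,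
    neg_one_pow_eq_neg_of_odd_add hpi, neg_one_pow_eq_neg_of_odd_add hqi]
  ring

lemma wheelDist_mulVec_wheelAlt (hn : 5 ≤ n) (hodd : Odd n) : wheelDist n *ᵥ wheelAlt n = 0 := by
  have : NeZero n := ⟨by omega⟩
  funext i
  by_cases hi : (i : ℕ) = 0
  · obtain rfl : i = 0 := Fin.ext hi
    rw [wheelDist_mulVec_apply_zero, sum_wheelAlt hodd, wheelAlt_zero, sub_zero, Pi.zero_apply]
  · have := i.isLt
    let p : Fin n := ⟨if (i : ℕ) = 1 then n - 1 else (i : ℕ) - 1, by split_ifs <;> omega⟩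
    let q : Fin n := ⟨if (i : ℕ) = n - 1 then 1 else (i : ℕ) + 1, by split_ifs <;> omega⟩
    rw [wheelDist_mulVec_apply_of_ne_zero (by omega) _ hi (p := p) rfl (q := q) rfl,
      sum_wheelAlt hodd, wheelAlt_zero, Pi.zero_apply]
    linear_combination -wheelAlt_add_wheelAlt_of_ne_zero hodd hi (p := p) rfl (q := q) rfl

open Fin.NatCast in
lemma sum_univ_fin_eq_add_sum_range [NeZero n] {M : Type*} [AddCommMonoid M] (f : Fin n → M) :
    ∑ j, f j = f 0 + ∑ k ∈ Finset.range (n - 1), f ((k + 1 : ℕ) : Fin n) := by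
  have h := Fin.sum_univ_eq_sum_range (fun k => f (k : Fin n)) n
  simp only [Fin.cast_val_eq_self] at h
  rw [h, Finset.range_eq_Ico, Finset.sum_eq_sum_Ico_succ_bot (NeZero.pos n),
    Finset.sum_Ico_eq_sum_range]
  simp only [Nat.cast_zero, add_comm 1]

lemma sum_eq_apply_zero_of_wheelDist_mulVec_eq_zero [NeZero n] {v : Fin n → ℝ}
    (hv : wheelDist n *ᵥ v = 0) : ∑ j, v j = v 0 := by
  simpa [wheelDist_mulVec_apply_zero, sub_eq_zero] using congrFun hv 0

open Fin.NatCast in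
lemma add_two_mul_add_eq_of_wheelDist_mulVec_eq_zero [NeZero n] (hn : 4 ≤ n) {v : Fin n → ℝ}
    (hv : wheelDist n *ᵥ v = 0) {i p q : ℕ} (hi : 0 < i) (hin : i < n)
    (hp : p = if i = 1 then n - 1 else i - 1) (hq : q = if i = n - 1 then 1 else i + 1) :
    v (p : Fin n) + 2 * v (i : Fin n) + v (q : Fin n) = v 0 := by
  have hpn : p < n := by split_ifs at hp <;> omega
  have hqn : q < n := by split_ifs at hq <;> omega
  have := congrFun hv (i : Fin n)
  rw [wheelDist_mulVec_apply_of_ne_zero hn v (i := (i : Fin n)) (p := (p : Fin n))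
    (q := (q : Fin n)) (by rw [Fin.val_cast_of_lt hin]; omega)
    (by rwa [Fin.val_cast_of_lt hin, Fin.val_cast_of_lt hpn])
    (by rwa [Fin.val_cast_of_lt hin, Fin.val_cast_of_lt hqn]),
    sum_eq_apply_zero_of_wheelDist_mulVec_eq_zero hv, Pi.zero_apply] at this
  linarith

open Fin.NatCast in
lemma exists_eq_smul_wheelAlt_of_mulVec_eq_zero (hn : 5 ≤ n) (hodd : Odd n) {v : Fin n → ℝ}
    (hv : wheelDist n *ᵥ v = 0) : ∃ t : ℝ, v = t • wheelAlt n := by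
  have : NeZero n := ⟨by omega⟩
  have hrim := @add_two_mul_add_eq_of_wheelDist_mulVec_eq_zero n _ (by omega) v hv
  have hrec : ∀ k, k + 2 ≤ n - 1 - 1 → v ((k + 1 : ℕ) : Fin n) + 2 * v ((k + 1 + 1 : ℕ) : Fin n)
      + v ((k + 2 + 1 : ℕ) : Fin n) = 4 * (v 0 / 4) := fun k hk => by
    rw [hrim (i := k + 1 + 1) (p := k + 1) (q := k + 2 + 1) (by omega) (by omega)
      (by split_ifs <;> omega) (by split_ifs <;> omega)]
    ring
  have hwrap : v ((n - 1 - 1 + 1 : ℕ) : Fin n) + 2 * v ((0 + 1 : ℕ) : Fin n)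
      + v ((1 + 1 : ℕ) : Fin n) = 4 * (v 0 / 4) := by
    rw [hrim (i := 1) (p := n - 1 - 1 + 1) (q := 1 + 1) (by omega) (by omega)
      (by split_ifs <;> omega) (by split_ifs <;> omega)]
    ring
  have hrimsum : ∑ k ∈ Finset.range (n - 1), v ((k + 1 : ℕ) : Fin n) = 0 := by
    have h := sum_univ_fin_eq_add_sum_range v
    rw [sum_eq_apply_zero_of_wheelDist_mulVec_eq_zero hv] at h
    linarith
  obtain ⟨hc, A, hA⟩ := exists_eq_mul_neg_one_pow_of_cyclic_add_two_mul_add_eq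
    (u := fun k => v ((k + 1 : ℕ) : Fin n)) (by omega) (Nat.Odd.sub_odd hodd odd_one) hrec hwrap
    hrimsum
  refine ⟨-A, funext fun j => ?_⟩
  rw [Pi.smul_apply, smul_eq_mul]
  rcases Nat.eq_zero_or_pos j with hj | hj
  · obtain rfl : j = 0 := Fin.ext hj
    rw [wheelAlt_zero]
    linarith
  · obtain ⟨k, hk⟩ : ∃ k, (j : ℕ) = k + 1 := ⟨j - 1, by omega⟩
    have hvj := hA k (by omega)
    rw [show ((k + 1 : ℕ) : Fin n) = j from Fin.ext (by rw [Fin.val_cast_of_lt (by omega), hk])]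
      at hvj
    rw [hvj, wheelAlt_of_ne_zero hj.ne', hk, pow_succ]
    ring

end Wheel

theorem stmt19 {n : ℕ} (hn : 5 ≤ n) (hodd : Odd n)
    (D : Matrix (Fin n) (Fin n) ℝ)
    (hD : D = Matrix.of fun i j : Fin n =>
      if i = j then 0
      else if (i : ℕ) = 0 ∨ (j : ℕ) = 0 then 1
      else if (i : ℕ) + 1 = (j : ℕ) ∨ (j : ℕ) + 1 = (i : ℕ) ∨
        ((i : ℕ) = 1 ∧ (j : ℕ) = n - 1) ∨ ((j : ℕ) = 1 ∧ (i : ℕ) = n - 1) then 1 else 2)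
    (a : Fin n → ℝ) (ha : ∀ j, a j = if (j : ℕ) = 0 then 0 else (-1 : ℝ)^(j : ℕ))
    (X : Matrix (Fin n) (Fin n) ℝ) (hX : IsMPR D X) :
    LinearMap.ker D.mulVecLin = Submodule.span ℝ {a} ∧
    IsUnit (D + vecMulVec a a) ∧
    X = (D + vecMulVec a a)⁻¹ - (1/((n : ℝ)-1)^2) • vecMulVec a a := by
  have : NeZero n := ⟨by omega⟩
  obtain rfl : D = wheelDist n := hD
  obtain rfl : a = wheelAlt n := funext ha
  have hDa := wheelDist_mulVec_wheelAlt hn hodd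
  have hker := fun v => exists_eq_smul_wheelAlt_of_mulVec_eq_zero hn hodd (v := v)
  have hunit := isUnit_add_vecMulVec_self wheelDist_transpose hDa hker
  have hmpr := isMPR_inv_add_vecMulVec_self_sub wheelDist_transpose hDa hunit
  rw [wheelAlt_dotProduct_self] at hmpr
  exact ⟨ker_mulVecLin_eq_span_singleton hDa hker, hunit, hX.unique hmpr⟩
end
end
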